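/- arXiv:1011.0285 — 9 statements merged into one kernel-verified Lean document; each statement's English description precedes it below -/
import Mathlib

section
/- Let n ≥ 3 and let α₁,…,α_n be positive integers. The genus-zero equation 2 + (n−2)·A = Σ_{i=1}^n A_i holds (as an identity of rational numbers) if and only if one of the following three conditions holds: (1) the α_i are pairwise coprime; (2) there is exactly one unordered pair of indices k ≠ l with gcd(α_k,α_l) ≠ 1, and gcd(α_i,α_j) = 1 for every other pair i ≠ j; (3) there are three distinct indices k, l, m with gcd(α_k,α_l) = gcd(α_l,α_m) = gcd(α_k,α_m) = 2 and gcd(α_i,α_j) = 1 for every pair i ≠ j not contained in {k,l,m}. -/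
/-!
Write `P(s) = (∏_{i ∈ s} α i) / lcm_{i ∈ s} α i`, so that `A = P(univ)` and `A_i = P(univ \ {i})`,
and let `S` be the set of indices `i` for which `α i` shares a factor with some other `α j`.
Adding one index multiplies `P` by `gcd(α i, lcm_s α)`, so indices outside `S` can be dropped:
`A_i = A` for `i ∉ S`, while `A ≥ gcd(α i, α j) · A_i ≥ 2 A_i` for `i ∈ S`. The genus-zero
equation thus becomes `∑_{i ∈ S} A_i + 2A = 2 + |S| A`, which forces `|S| ≤ 3`, and `|S| = 1`
is impossible. If `S = {k, l, m}` with pairwise gcds `x, y, z`, then `A_k = y`, `A_l = z`,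
`A_m = x`, so `x + y + z = A + 2` while `A` is at least `xy, yz, zx, 2x, 2y, 2z`; the only solution
is `x = y = z = 2`. Conversely each of the three configurations satisfies the reduced equation.
-/

/-- `A = (∏ i, α i) / lcm(α₁,…,α_n)`, an exact natural-number division since the
lcm of a finite family of positive integers divides their product. -/
def brA (n : ℕ) (α : Fin n → ℕ) : ℕ :=
  (∏ i, α i) / Finset.univ.lcm α

/-- `A_i = (∏_{j ≠ i} α j) / lcm_{j ≠ i}(α j)`. -/
def brAi (n : ℕ) (α : Fin n → ℕ) (i : Fin n) : ℕ :=
  (∏ j ∈ Finset.univ.erase i, α j) / (Finset.univ.erase i).lcm α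

/-- The genus-zero equation `2 + (n − 2)·A = Σ_{i=1}^n A_i` as an identity of
rational numbers. -/
def genusEq (n : ℕ) (α : Fin n → ℕ) : Prop :=
  (2 : ℚ) + ((n : ℚ) - 2) * (brA n α : ℚ) = ∑ i, (brAi n α i : ℚ)

open Finset

theorem Nat.eq_two_of_mul_le_of_add_eq {x y z A : ℕ} (hxy : x * y ≤ A) (hyz : y * z ≤ A)
    (hzx : z * x ≤ A) (hx : 2 * x ≤ A) (hy : 2 * y ≤ A) (hz : 2 * z ≤ A)
    (h : x + y + z = A + 2) : x = 2 ∧ y = 2 ∧ z = 2 := by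
  -- for `x ≥ 3`, `x (y + z) ≤ 2A = 2 (x + y + z - 2)` forces `y + z ≤ 2`, against `2x ≤ A`
  have hx2 : x ≤ 2 := by nlinarith
  have hy2 : y ≤ 2 := by nlinarith
  have hz2 : z ≤ 2 := by nlinarith
  interval_cases x <;> interval_cases y <;> interval_cases z <;> omega

theorem Nat.gcd_lcm_eq_lcm_gcd {a b c : ℕ} (ha : a ≠ 0) (hb : b ≠ 0) (hc : c ≠ 0) :
    Nat.gcd a (Nat.lcm b c) = Nat.lcm (Nat.gcd a b) (Nat.gcd a c) := by
  have hab : Nat.gcd a b ≠ 0 := Nat.gcd_ne_zero_left ha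
  have hac : Nat.gcd a c ≠ 0 := Nat.gcd_ne_zero_left ha
  refine Nat.eq_of_factorization_eq (Nat.gcd_ne_zero_left ha) (Nat.lcm_ne_zero hab hac) fun p => ?_
  simp only [Nat.factorization_gcd ha (Nat.lcm_ne_zero hb hc), Nat.factorization_lcm hb hc,
    Nat.factorization_lcm hab hac, Nat.factorization_gcd ha hb, Nat.factorization_gcd ha hc,
    Finsupp.inf_apply, Finsupp.sup_apply]
  exact min_max_distrib_left _ _ _

theorem Finset.sum_triple {ι M : Type*} [DecidableEq ι] [AddCommMonoid M] (g : ι → M) {a b c : ι}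
    (hab : a ≠ b) (hbc : b ≠ c) (hac : a ≠ c) : ∑ i ∈ {a, b, c}, g i = g a + g b + g c := by
  rw [sum_insert (by simp [hab, hac]), sum_pair hbc, add_assoc]

section ProdDivLcm

variable {ι : Type*} {f : ι → ℕ} {s t : Finset ι} {i j : ι}

theorem Finset.coprime_lcm_iff {a : ℕ} : Nat.Coprime a (s.lcm f) ↔ ∀ i ∈ s, Nat.Coprime a (f i) :=
  ⟨fun h _ hi => h.coprime_dvd_right (dvd_lcm hi),
    fun h => (Nat.coprime_prod_right_iff.2 h).coprime_dvd_right (s.lcm_dvd_prod f)⟩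

theorem Finset.lcm_pos (hf : ∀ i ∈ s, 0 < f i) : 0 < s.lcm f :=
  Nat.pos_of_ne_zero fun h => by
    obtain ⟨i, hi, h0⟩ := lcm_eq_zero_iff.1 h
    exact (hf i hi).ne' h0

-- `brA n α` and `brAi n α i` unfold to `prodDivLcm univ α` and `prodDivLcm (univ.erase i) α`.
def prodDivLcm (s : Finset ι) (f : ι → ℕ) : ℕ :=
  (∏ i ∈ s, f i) / s.lcm f

theorem prodDivLcm_pos (hf : ∀ i ∈ s, 0 < f i) : 0 < prodDivLcm s f :=
  Nat.div_pos (Nat.le_of_dvd (prod_pos hf) (s.lcm_dvd_prod f)) (lcm_pos hf)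

@[simp]
theorem prodDivLcm_empty : prodDivLcm ∅ f = 1 := by
  simp [prodDivLcm]

variable [DecidableEq ι]

theorem prodDivLcm_insert (hi : i ∉ s) (hf : ∀ j ∈ insert i s, 0 < f j) :
    prodDivLcm (insert i s) f = Nat.gcd (f i) (s.lcm f) * prodDivLcm s f := by
  have hfi : 0 < f i := hf i (mem_insert_self i s)
  have hL : 0 < s.lcm f := lcm_pos fun j hj => hf j (mem_insert_of_mem hj)
  obtain ⟨c, hc⟩ := s.lcm_dvd_prod f
  have hP : prodDivLcm s f = c := by rw [prodDivLcm, hc, Nat.mul_div_cancel_left _ hL]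
  rw [prodDivLcm, prod_insert hi, lcm_insert, lcm_eq_nat_lcm, hc, hP, ← mul_assoc,
    ← Nat.gcd_mul_lcm (f i) (s.lcm f), mul_comm (Nat.gcd _ _), mul_assoc,
    Nat.mul_div_cancel_left _ (Nat.lcm_pos hfi hL)]

theorem prodDivLcm_singleton (hi : 0 < f i) : prodDivLcm {i} f = 1 := by
  rw [← insert_empty, prodDivLcm_insert (notMem_empty i) (by simpa using hi)]
  simp

theorem prodDivLcm_pair (hij : i ≠ j) (hi : 0 < f i) (hj : 0 < f j) :
    prodDivLcm {i, j} f = Nat.gcd (f i) (f j) := by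
  rw [prodDivLcm_insert (by simpa using hij) (by simp [hi, hj]), prodDivLcm_singleton hj,
    lcm_singleton, normalize_eq, mul_one]

theorem gcd_mul_prodDivLcm_erase_le (hf : ∀ j ∈ s, 0 < f j) (hi : i ∈ s) (hj : j ∈ s)
    (hji : j ≠ i) : Nat.gcd (f i) (f j) * prodDivLcm (s.erase i) f ≤ prodDivLcm s f := by
  refine Nat.le_of_dvd (prodDivLcm_pos hf) ?_
  conv_rhs => rw [← insert_erase hi]
  rw [prodDivLcm_insert (notMem_erase i s) (by rwa [insert_erase hi])]
  exact mul_dvd_mul_right (Nat.gcd_dvd_gcd_of_dvd_right _ (dvd_lcm (mem_erase.2 ⟨hji, hj⟩))) _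

theorem prodDivLcm_eq_of_subset (hf : ∀ j ∈ s, 0 < f j) (hts : t ⊆ s)
    (h : ∀ i ∈ s, i ∉ t → ∀ j ∈ s, j ≠ i → Nat.Coprime (f i) (f j)) :
    prodDivLcm s f = prodDivLcm t f := by
  induction s using Finset.strongInduction with
  | H s ih =>
    by_cases hst : s ⊆ t
    · rw [hst.antisymm hts]
    obtain ⟨i, his, hit⟩ := not_subset.1 hst
    have hcop : Nat.Coprime (f i) ((s.erase i).lcm f) :=
      coprime_lcm_iff.2 fun j hj => h i his hit j (mem_of_mem_erase hj) (ne_of_mem_erase hj)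
    have hfi : ∀ j ∈ s.erase i, 0 < f j := fun j hj => hf j (mem_of_mem_erase hj)
    conv_lhs => rw [← insert_erase his]
    rw [prodDivLcm_insert (notMem_erase i s) (by rwa [insert_erase his]), hcop, one_mul]
    exact ih _ (erase_ssubset his) hfi (subset_erase.2 ⟨hts, hit⟩)
      fun k hk hkt j hj hjk => h k (mem_of_mem_erase hk) hkt j (mem_of_mem_erase hj) hjk

end ProdDivLcm

section NonCoprimeIndices

variable {ι : Type*} [Fintype ι] [DecidableEq ι] {f : ι → ℕ} {i j : ι}

def nonCoprimeIndices (f : ι → ℕ) : Finset ι :=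
  {i | ∃ j ≠ i, Nat.gcd (f i) (f j) ≠ 1}

theorem mem_nonCoprimeIndices :
    i ∈ nonCoprimeIndices f ↔ ∃ j ≠ i, Nat.gcd (f i) (f j) ≠ 1 := by
  simp [nonCoprimeIndices]

theorem mem_nonCoprimeIndices_of_gcd_ne_one (hij : i ≠ j) (h : Nat.gcd (f i) (f j) ≠ 1) :
    i ∈ nonCoprimeIndices f ∧ j ∈ nonCoprimeIndices f :=
  ⟨mem_nonCoprimeIndices.2 ⟨j, hij.symm, h⟩,
    mem_nonCoprimeIndices.2 ⟨i, hij, by rwa [Nat.gcd_comm]⟩⟩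

theorem gcd_eq_one_of_notMem_nonCoprimeIndices (hi : i ∉ nonCoprimeIndices f) (hji : j ≠ i) :
    Nat.gcd (f i) (f j) = 1 := by
  by_contra h
  exact hi (mem_nonCoprimeIndices.2 ⟨j, hji, h⟩)

theorem nonCoprimeIndices_subset_iff {u : Finset ι} :
    nonCoprimeIndices f ⊆ u ↔
      ∀ i j, i ≠ j → ¬({i, j} : Finset ι) ⊆ u → Nat.gcd (f i) (f j) = 1 := by
  constructor
  · intro hu i j hij hsub
    by_contra h
    obtain ⟨hi, hj⟩ := mem_nonCoprimeIndices_of_gcd_ne_one hij h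
    exact hsub (insert_subset (hu hi) (singleton_subset_iff.2 (hu hj)))
  · intro h i hi
    obtain ⟨j, hji, hij⟩ := mem_nonCoprimeIndices.1 hi
    by_contra hiu
    exact hij (h i j hji.symm fun hsub => hiu (hsub (mem_insert_self i {j})))

theorem card_nonCoprimeIndices_ne_one : #(nonCoprimeIndices f) ≠ 1 := by
  intro h
  obtain ⟨i, hS⟩ := card_eq_one.1 h
  obtain ⟨j, hji, hij⟩ := mem_nonCoprimeIndices.1 (hS ▸ mem_singleton_self i)
  have hj := (mem_nonCoprimeIndices_of_gcd_ne_one hji.symm hij).2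
  rw [hS, mem_singleton] at hj
  exact hji hj

theorem nonCoprimeIndices_eq_empty_iff :
    nonCoprimeIndices f = ∅ ↔ ∀ i j, i ≠ j → Nat.gcd (f i) (f j) = 1 := by
  rw [← subset_empty, nonCoprimeIndices_subset_iff]
  simp only [subset_empty, insert_ne_empty, not_false_eq_true, forall_const]

theorem exists_nonCoprimeIndices_eq_pair_iff :
    (∃ k l, k ≠ l ∧ nonCoprimeIndices f = {k, l}) ↔
      ∃ k l, k ≠ l ∧ Nat.gcd (f k) (f l) ≠ 1 ∧
        ∀ i j, i ≠ j → ({i, j} : Finset ι) ≠ {k, l} → Nat.gcd (f i) (f j) = 1 := by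
  refine exists₂_congr fun k l => and_congr_right fun hkl => ⟨fun hS => ⟨?_, ?_⟩, fun h => ?_⟩
  · obtain ⟨j, hjk, hkj⟩ := mem_nonCoprimeIndices.1 (hS ▸ mem_insert_self k {l})
    have hj := (mem_nonCoprimeIndices_of_gcd_ne_one hjk.symm hkj).2
    rw [hS, mem_insert, mem_singleton] at hj
    exact hj.resolve_left hjk ▸ hkj
  · intro i j hij hne
    refine nonCoprimeIndices_subset_iff.1 hS.le i j hij fun hsub => hne ?_
    exact eq_of_subset_of_card_le hsub (by rw [card_pair hij, card_pair hkl])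
  · obtain ⟨hk, hl⟩ := mem_nonCoprimeIndices_of_gcd_ne_one hkl h.1
    refine (nonCoprimeIndices_subset_iff.2 fun i j hij hsub => h.2 i j hij ?_).antisymm ?_
    · exact fun heq => hsub heq.le
    · simp [insert_subset_iff, hk, hl]

theorem exists_nonCoprimeIndices_eq_triple_iff :
    (∃ k l m, k ≠ l ∧ l ≠ m ∧ k ≠ m ∧ Nat.gcd (f k) (f l) = 2 ∧ Nat.gcd (f l) (f m) = 2 ∧
        Nat.gcd (f k) (f m) = 2 ∧ nonCoprimeIndices f = {k, l, m}) ↔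
      ∃ k l m, k ≠ l ∧ l ≠ m ∧ k ≠ m ∧ Nat.gcd (f k) (f l) = 2 ∧ Nat.gcd (f l) (f m) = 2 ∧
        Nat.gcd (f k) (f m) = 2 ∧
        ∀ i j, i ≠ j → ¬({i, j} : Finset ι) ⊆ {k, l, m} → Nat.gcd (f i) (f j) = 1 := by
  refine exists₃_congr fun k l m => ?_
  simp only [and_congr_right_iff, ← nonCoprimeIndices_subset_iff]
  intro hkl hlm _ hx hy _
  obtain ⟨hk, hl⟩ := mem_nonCoprimeIndices_of_gcd_ne_one hkl (by rw [hx]; decide)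
  have hm := (mem_nonCoprimeIndices_of_gcd_ne_one hlm (by rw [hy]; decide)).2
  exact ⟨fun hS => hS.le, fun hS => hS.antisymm (by simp [insert_subset_iff, hk, hl, hm])⟩

end NonCoprimeIndices

section GenusEquation

variable {n : ℕ} {α : Fin n → ℕ} {i j k l m : Fin n}

def reducedGenusEq (n : ℕ) (α : Fin n → ℕ) : Prop :=
  ∑ i ∈ nonCoprimeIndices α, brAi n α i + 2 * brA n α = 2 + #(nonCoprimeIndices α) * brA n α

theorem brA_pos (hα : ∀ i, 0 < α i) : 0 < brA n α :=
  prodDivLcm_pos fun i _ => hα i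

theorem gcd_mul_brAi_le (hα : ∀ i, 0 < α i) (hji : j ≠ i) :
    Nat.gcd (α i) (α j) * brAi n α i ≤ brA n α :=
  gcd_mul_prodDivLcm_erase_le (fun j _ => hα j) (mem_univ i) (mem_univ j) hji

theorem two_mul_brAi_le (hα : ∀ i, 0 < α i) (hi : i ∈ nonCoprimeIndices α) :
    2 * brAi n α i ≤ brA n α := by
  obtain ⟨j, hji, hij⟩ := mem_nonCoprimeIndices.1 hi
  have h2 : 2 ≤ Nat.gcd (α i) (α j) := by
    have := Nat.gcd_pos_of_pos_left (α j) (hα i)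
    omega
  exact (Nat.mul_le_mul_right _ h2).trans (gcd_mul_brAi_le hα hji)

theorem brAi_eq_brA_of_notMem (hα : ∀ i, 0 < α i) (hi : i ∉ nonCoprimeIndices α) :
    brAi n α i = brA n α := by
  refine (prodDivLcm_eq_of_subset (fun j _ => hα j) (erase_subset i univ) ?_).symm
  intro k _ hk j _ hjk
  obtain rfl : k = i := by simpa using hk
  exact gcd_eq_one_of_notMem_nonCoprimeIndices hi hjk

theorem brA_eq_prodDivLcm_nonCoprimeIndices (hα : ∀ i, 0 < α i) :
    brA n α = prodDivLcm (nonCoprimeIndices α) α :=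
  prodDivLcm_eq_of_subset (fun j _ => hα j) (subset_univ _) fun _ _ hi _ _ hji =>
    gcd_eq_one_of_notMem_nonCoprimeIndices hi hji

theorem brAi_eq_prodDivLcm_erase_nonCoprimeIndices (hα : ∀ i, 0 < α i) (i : Fin n) :
    brAi n α i = prodDivLcm ((nonCoprimeIndices α).erase i) α :=
  prodDivLcm_eq_of_subset (fun j _ => hα j) (erase_subset_erase i (subset_univ _))
    fun _ hk hkS _ _ hjk => gcd_eq_one_of_notMem_nonCoprimeIndices
      (fun h => hkS (mem_erase.2 ⟨ne_of_mem_erase hk, h⟩)) hjk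

theorem genusEq_iff_sum_nonCoprimeIndices (hα : ∀ i, 0 < α i) :
    genusEq n α ↔ reducedGenusEq n α := by
  set S := nonCoprimeIndices α
  have hcompl : ∑ i ∈ Sᶜ, (brAi n α i : ℚ) = ((n : ℚ) - #S) * brA n α := by
    rw [sum_congr rfl fun i hi => by rw [brAi_eq_brA_of_notMem hα (mem_compl.1 hi)], sum_const,
      card_compl, Fintype.card_fin, nsmul_eq_mul, Nat.cast_sub (by simpa using card_le_univ S)]
  rw [genusEq, reducedGenusEq, ← sum_add_sum_compl S, hcompl, ← Nat.cast_inj (R := ℚ)]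
  push_cast
  constructor <;> intro h <;> linarith

theorem brAi_eq_gcd_of_nonCoprimeIndices_eq (hα : ∀ i, 0 < α i) (hkl : k ≠ l) (hlm : l ≠ m)
    (hkm : k ≠ m) (hS : nonCoprimeIndices α = {k, l, m}) :
    brAi n α k = Nat.gcd (α l) (α m) := by
  rw [brAi_eq_prodDivLcm_erase_nonCoprimeIndices hα, hS, erase_insert (by simp [hkl, hkm]),
    prodDivLcm_pair hlm (hα l) (hα m)]

theorem gcd_eq_two_of_nonCoprimeIndices_eq (hα : ∀ i, 0 < α i)
    (h : reducedGenusEq n α)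
    (hkl : k ≠ l) (hlm : l ≠ m) (hkm : k ≠ m) (hS : nonCoprimeIndices α = {k, l, m}) :
    Nat.gcd (α k) (α l) = 2 ∧ Nat.gcd (α l) (α m) = 2 ∧ Nat.gcd (α k) (α m) = 2 := by
  have hk := brAi_eq_gcd_of_nonCoprimeIndices_eq hα hkl hlm hkm hS
  have hl := brAi_eq_gcd_of_nonCoprimeIndices_eq hα hkl.symm hkm hlm
    (hS.trans (insert_comm k l {m}))
  have hm := brAi_eq_gcd_of_nonCoprimeIndices_eq hα hkm.symm hkl hlm.symm
    (by rw [hS, pair_comm l m, insert_comm k m])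
  have two_mul_le (i) (hi : i ∈ ({k, l, m} : Finset (Fin n))) := two_mul_brAi_le hα (hS ▸ hi)
  rw [reducedGenusEq, hS, sum_triple _ hkl hlm hkm,
    card_eq_three.2 ⟨k, l, m, hkl, hkm, hlm, rfl⟩] at h
  refine Nat.eq_two_of_mul_le_of_add_eq (A := brA n α) ?_ ?_ ?_ ?_ ?_ ?_ (by omega)
  · simpa [hk] using gcd_mul_brAi_le hα hkl.symm
  · simpa [hl] using gcd_mul_brAi_le hα hlm.symm
  · simpa [hm, Nat.gcd_comm (α m)] using gcd_mul_brAi_le hα hkm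
  · simpa [hm] using two_mul_le m (by simp)
  · simpa [hk] using two_mul_le k (by simp)
  · simpa [hl] using two_mul_le l (by simp)

theorem card_nonCoprimeIndices_le_three (hα : ∀ i, 0 < α i)
    (h : reducedGenusEq n α) :
    #(nonCoprimeIndices α) ≤ 3 := by
  have hsum : 2 * ∑ i ∈ nonCoprimeIndices α, brAi n α i ≤ #(nonCoprimeIndices α) * brA n α := by
    rw [mul_sum, ← smul_eq_mul]
    exact sum_le_card_nsmul _ _ _ fun i hi => two_mul_brAi_le hα hi
  rw [reducedGenusEq] at h
  nlinarith [brA_pos hα]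

theorem sum_eq_of_nonCoprimeIndices_eq_pair (hα : ∀ i, 0 < α i) (hkl : k ≠ l)
    (hS : nonCoprimeIndices α = {k, l}) :
    reducedGenusEq n α := by
  have hk : brAi n α k = 1 := by
    rw [brAi_eq_prodDivLcm_erase_nonCoprimeIndices hα, hS, erase_insert (by simpa using hkl),
      prodDivLcm_singleton (hα l)]
  have hl : brAi n α l = 1 := by
    rw [brAi_eq_prodDivLcm_erase_nonCoprimeIndices hα, hS, pair_comm,
      erase_insert (by simpa using hkl.symm), prodDivLcm_singleton (hα k)]
  rw [reducedGenusEq, hS, sum_pair hkl, hk, hl, card_pair hkl]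

theorem sum_eq_of_nonCoprimeIndices_eq_triple (hα : ∀ i, 0 < α i) (hkl : k ≠ l) (hlm : l ≠ m)
    (hkm : k ≠ m) (hx : Nat.gcd (α k) (α l) = 2) (hy : Nat.gcd (α l) (α m) = 2)
    (hz : Nat.gcd (α k) (α m) = 2) (hS : nonCoprimeIndices α = {k, l, m}) :
    reducedGenusEq n α := by
  have hA : brA n α = 4 := by
    rw [brA_eq_prodDivLcm_nonCoprimeIndices hα, hS,
      prodDivLcm_insert (by simp [hkl, hkm]) fun i _ => hα i, prodDivLcm_pair hlm (hα l) (hα m),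
      lcm_insert, lcm_singleton, normalize_eq, lcm_eq_nat_lcm,
      Nat.gcd_lcm_eq_lcm_gcd (hα k).ne' (hα l).ne' (hα m).ne', hx, hy, hz]
    rfl
  rw [reducedGenusEq, hS, sum_triple _ hkl hlm hkm,
    card_eq_three.2 ⟨k, l, m, hkl, hkm, hlm, rfl⟩, brAi_eq_gcd_of_nonCoprimeIndices_eq hα hkl hlm hkm hS,
    brAi_eq_gcd_of_nonCoprimeIndices_eq hα hkl.symm hkm hlm (hS.trans (insert_comm k l {m})),
    brAi_eq_gcd_of_nonCoprimeIndices_eq hα hkm.symm hkl hlm.symm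
      (by rw [hS, pair_comm l m, insert_comm k m]), hx, hy, hz, hA]

theorem genusEq_iff_nonCoprimeIndices (hα : ∀ i, 0 < α i) :
    genusEq n α ↔ nonCoprimeIndices α = ∅ ∨ (∃ k l, k ≠ l ∧ nonCoprimeIndices α = {k, l}) ∨
      ∃ k l m, k ≠ l ∧ l ≠ m ∧ k ≠ m ∧ Nat.gcd (α k) (α l) = 2 ∧ Nat.gcd (α l) (α m) = 2 ∧
        Nat.gcd (α k) (α m) = 2 ∧ nonCoprimeIndices α = {k, l, m} := by
  rw [genusEq_iff_sum_nonCoprimeIndices hα]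
  constructor
  · intro h
    have hcard : #(nonCoprimeIndices α) = 0 ∨ #(nonCoprimeIndices α) = 2 ∨
        #(nonCoprimeIndices α) = 3 := by
      have := card_nonCoprimeIndices_le_three hα h
      have := card_nonCoprimeIndices_ne_one (f := α)
      omega
    rcases hcard with hc | hc | hc
    · exact Or.inl (card_eq_zero.1 hc)
    · exact Or.inr (Or.inl (card_eq_two.1 hc))
    · obtain ⟨k, l, m, hkl, hkm, hlm, hS⟩ := card_eq_three.1 hc
      obtain ⟨hx, hy, hz⟩ := gcd_eq_two_of_nonCoprimeIndices_eq hα h hkl hlm hkm hS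
      exact Or.inr (Or.inr ⟨k, l, m, hkl, hlm, hkm, hx, hy, hz, hS⟩)
  · rintro (hS | ⟨k, l, hkl, hS⟩ | ⟨k, l, m, hkl, hlm, hkm, hx, hy, hz, hS⟩)
    · simp [reducedGenusEq, hS, brA_eq_prodDivLcm_nonCoprimeIndices hα]
    · exact sum_eq_of_nonCoprimeIndices_eq_pair hα hkl hS
    · exact sum_eq_of_nonCoprimeIndices_eq_triple hα hkl hlm hkm hx hy hz hS

end GenusEquation

theorem genus_zero_iff_general (n : ℕ) (α : Fin n → ℕ) (hα : ∀ i, 0 < α i) :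
    genusEq n α ↔
      ((∀ i j : Fin n, i ≠ j → Nat.gcd (α i) (α j) = 1) ∨
       (∃ k l : Fin n, k ≠ l ∧ Nat.gcd (α k) (α l) ≠ 1 ∧
         ∀ i j : Fin n, i ≠ j → ({i, j} : Finset (Fin n)) ≠ {k, l} →
           Nat.gcd (α i) (α j) = 1) ∨
       (∃ k l m : Fin n, k ≠ l ∧ l ≠ m ∧ k ≠ m ∧
         Nat.gcd (α k) (α l) = 2 ∧ Nat.gcd (α l) (α m) = 2 ∧ Nat.gcd (α k) (α m) = 2 ∧
         ∀ i j : Fin n, i ≠ j → ¬({i, j} : Finset (Fin n)) ⊆ {k, l, m} →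
           Nat.gcd (α i) (α j) = 1)) := by
  rw [genusEq_iff_nonCoprimeIndices hα, nonCoprimeIndices_eq_empty_iff,
    exists_nonCoprimeIndices_eq_pair_iff, exists_nonCoprimeIndices_eq_triple_iff]

theorem genus_zero_iff (n : ℕ) (hn : 3 ≤ n) (α : Fin n → ℕ) (hα : ∀ i, 0 < α i) :
    genusEq n α ↔
      ((∀ i j : Fin n, i ≠ j → Nat.gcd (α i) (α j) = 1) ∨
       (∃ k l : Fin n, k ≠ l ∧ Nat.gcd (α k) (α l) ≠ 1 ∧
         ∀ i j : Fin n, i ≠ j → ({i, j} : Finset (Fin n)) ≠ {k, l} →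
           Nat.gcd (α i) (α j) = 1) ∨
       (∃ k l m : Fin n, k ≠ l ∧ l ≠ m ∧ k ≠ m ∧
         Nat.gcd (α k) (α l) = 2 ∧ Nat.gcd (α l) (α m) = 2 ∧ Nat.gcd (α k) (α m) = 2 ∧
         ∀ i j : Fin n, i ≠ j → ¬({i, j} : Finset (Fin n)) ⊆ {k, l, m} →
           Nat.gcd (α i) (α j) = 1)) :=
  genus_zero_iff_general n α hα
end

section
/- Let n ≥ 3 and let α₁,…,α_n be positive integers. Suppose there are three distinct indices k, l, m with gcd(α_k,α_l) = gcd(α_l,α_m) = gcd(α_k,α_m) = 2, and gcd(α_i,α_j) = 1 for every pair i ≠ j not contained in {k,l,m}. Then the genus-zero equation 2 + (n−2)·A = Σ_{i=1}^n A_i holds. -/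
lemma myLcmDvdProd {ι : Type*} (s : Finset ι) (f : ι → ℕ) : s.lcm f ∣ ∏ i ∈ s, f i :=
  Finset.lcm_dvd fun _ hi => Finset.dvd_prod_of_mem f hi

lemma myLcmEqProd {ι : Type*} [DecidableEq ι] (s : Finset ι) (f : ι → ℕ)
    (h : ∀ i ∈ s, ∀ j ∈ s, i ≠ j → Nat.Coprime (f i) (f j)) :
    s.lcm f = ∏ i ∈ s, f i := by
  induction s using Finset.induction_on with
  | empty => simp
  | @insert a s ha ih =>
    rw [Finset.lcm_insert, Finset.prod_insert ha,
      ih fun i hi j hj hij => h i (Finset.mem_insert_of_mem hi) j (Finset.mem_insert_of_mem hj) hij]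
    have hcop : Nat.Coprime (f a) (∏ i ∈ s, f i) :=
      Nat.Coprime.prod_right fun j hj =>
        h a (Finset.mem_insert_self a s) j (Finset.mem_insert_of_mem hj)
          (fun e => ha (e ▸ hj))
    exact hcop.lcm_eq_mul

lemma myRatio {ι : Type*} [DecidableEq ι] (α : ι → ℕ) (hα : ∀ i, 0 < α i)
    (s t : Finset ι) (hts : t ⊆ s)
    (hcop : ∀ i ∈ s \ t, ∀ j ∈ s, i ≠ j → Nat.Coprime (α i) (α j)) :
    (∏ i ∈ s, α i) / s.lcm α = (∏ i ∈ t, α i) / t.lcm α := by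
  have hR : (s \ t).lcm α = ∏ i ∈ s \ t, α i :=
    myLcmEqProd _ _ fun i hi j hj hij =>
      hcop i hi j (Finset.mem_sdiff.mp hj).1 hij
  have hcopP : Nat.Coprime (∏ i ∈ s \ t, α i) (t.lcm α) :=
    Nat.Coprime.prod_left fun i hi =>
      Nat.Coprime.coprime_dvd_right (myLcmDvdProd t α)
        (Nat.Coprime.prod_right fun j hj =>
          hcop i hi j (hts hj) (fun e => (Finset.mem_sdiff.mp hi).2 (e ▸ hj)))
  have hlcm : s.lcm α = (∏ i ∈ s \ t, α i) * t.lcm α := by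
    conv_lhs => rw [← Finset.sdiff_union_of_subset hts, Finset.lcm_union, hR]
    exact hcopP.lcm_eq_mul
  have hprod : (∏ i ∈ s, α i) = (∏ i ∈ s \ t, α i) * ∏ i ∈ t, α i :=
    (Finset.prod_sdiff hts).symm
  rw [hprod, hlcm, Nat.mul_div_mul_left _ _ (Finset.prod_pos fun i _ => hα i)]

lemma myPair (x y : ℕ) (hxy : Nat.gcd x y = 2) : x * y = 2 * Nat.lcm x y := by
  rw [← Nat.gcd_mul_lcm x y, hxy]

lemma myTriple (x y z : ℕ) (hxy : Nat.gcd x y = 2) (hyz : Nat.gcd y z = 2)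
    (hxz : Nat.gcd x z = 2) : x * (y * z) = 4 * Nat.lcm x (Nat.lcm y z) := by
  obtain ⟨a, rfl⟩ : 2 ∣ x := hxy ▸ Nat.gcd_dvd_left _ _
  obtain ⟨b, rfl⟩ : 2 ∣ y := hyz ▸ Nat.gcd_dvd_left _ _
  obtain ⟨c, rfl⟩ : 2 ∣ z := hxz ▸ Nat.gcd_dvd_right _ _
  rw [Nat.gcd_mul_left] at hxy hyz hxz
  have hab : Nat.Coprime a b := Nat.coprime_iff_gcd_eq_one.mpr (by omega)
  have hbc : Nat.Coprime b c := Nat.coprime_iff_gcd_eq_one.mpr (by omega)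
  have hac : Nat.Coprime a c := Nat.coprime_iff_gcd_eq_one.mpr (by omega)
  rw [Nat.lcm_mul_left, hbc.lcm_eq_mul, Nat.lcm_mul_left, (hab.mul_right hac).lcm_eq_mul]
  ring

theorem genus_zero_of_triple (n : ℕ) (hn : 3 ≤ n) (α : Fin n → ℕ)
    (hα : ∀ i, 0 < α i) (k l m : Fin n) (hkl : k ≠ l) (hlm : l ≠ m) (hkm : k ≠ m)
    (h2kl : Nat.gcd (α k) (α l) = 2) (h2lm : Nat.gcd (α l) (α m) = 2)
    (h2km : Nat.gcd (α k) (α m) = 2)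
    (h : ∀ i j : Fin n, i ≠ j → ¬({i, j} : Finset (Fin n)) ⊆ {k, l, m} →
      Nat.gcd (α i) (α j) = 1) :
    genusEq n α := by
  set T : Finset (Fin n) := {k, l, m} with hT
  have hcop' : ∀ i j : Fin n, i ∉ T → i ≠ j → Nat.Coprime (α i) (α j) := by
    intro i j hiT hij
    exact h i j hij (fun hs => hiT (hs (by simp)))
  -- lcm and product over T
  have hkT : k ∉ ({l, m} : Finset (Fin n)) := by simp [hkl, hkm]
  have hlT : l ∉ ({m} : Finset (Fin n)) := by simp [hlm]
  have hTprod : (∏ i ∈ T, α i) = α k * (α l * α m) := by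
    rw [hT, Finset.prod_insert hkT, Finset.prod_insert hlT, Finset.prod_singleton]
  have hTlcm : T.lcm α = Nat.lcm (α k) (Nat.lcm (α l) (α m)) := by
    rw [hT, Finset.lcm_insert, Finset.lcm_insert, Finset.lcm_singleton]
    simp only [normalize_eq]
    rfl
  have hTlcm_pos : 0 < T.lcm α := by
    rw [hTlcm]
    exact Nat.lcm_pos (hα k) (Nat.lcm_pos (hα l) (hα m))
  have hT4 : (∏ i ∈ T, α i) / T.lcm α = 4 := by
    rw [hTprod, hTlcm, myTriple _ _ _ h2kl h2lm h2km, Nat.mul_div_cancel _ (by rwa [hTlcm] at hTlcm_pos)]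
  -- value of brA
  have hA : brA n α = 4 := by
    rw [brA, myRatio α hα Finset.univ T (Finset.subset_univ T)
      (fun i hi j _ hij => hcop' i j (Finset.mem_sdiff.mp hi).2 hij), hT4]
  -- pair helper
  have pairDiv : ∀ u v : Fin n, u ≠ v → Nat.gcd (α u) (α v) = 2 →
      (∏ i ∈ ({u, v} : Finset (Fin n)), α i) / (({u, v} : Finset (Fin n)).lcm α) = 2 := by
    intro u v huv hg
    have hu : u ∉ ({v} : Finset (Fin n)) := by simp [huv]
    rw [Finset.prod_insert hu, Finset.prod_singleton, Finset.lcm_insert, Finset.lcm_singleton]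
    simp only [normalize_eq]
    have hlcm : lcm (α u) (α v) = Nat.lcm (α u) (α v) := rfl
    rw [hlcm, myPair _ _ hg, Nat.mul_div_cancel _ (Nat.lcm_pos (hα u) (hα v))]
  -- values of brAi
  have hAi : ∀ i, brAi n α i = if i ∈ T then 2 else 4 := by
    intro i
    by_cases hiT : i ∈ T
    · rw [if_pos hiT]
      have key : ∀ u v : Fin n, u ≠ v → i ≠ u → i ≠ v → T = {i, u, v} →
          Nat.gcd (α u) (α v) = 2 → brAi n α i = 2 := by
        intro u v huv hiu hiv hTeq hg
        rw [brAi, myRatio α hα (Finset.univ.erase i) ({u, v} : Finset (Fin n))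
          (by intro x hx
              rw [Finset.mem_insert, Finset.mem_singleton] at hx
              rcases hx with rfl | rfl
              · exact Finset.mem_erase.mpr ⟨Ne.symm hiu, Finset.mem_univ _⟩
              · exact Finset.mem_erase.mpr ⟨Ne.symm hiv, Finset.mem_univ _⟩)
          ?_, pairDiv u v huv hg]
        intro x hx j _ hxj
        apply hcop' x j ?_ hxj
        rw [Finset.mem_sdiff, Finset.mem_erase, Finset.mem_insert,
          Finset.mem_singleton] at hx
        rw [hTeq, Finset.mem_insert, Finset.mem_insert, Finset.mem_singleton]
        push_neg
        exact ⟨hx.1.1, fun h => hx.2 (Or.inl h), fun h => hx.2 (Or.inr h)⟩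
      rw [hT, Finset.mem_insert, Finset.mem_insert, Finset.mem_singleton] at hiT
      rcases hiT with rfl | rfl | rfl
      · exact key l m hlm hkl hkm hT h2lm
      · exact key k m hkm (Ne.symm hkl) hlm (by rw [hT]; ext x; simp; tauto) h2km
      · exact key k l hkl (Ne.symm hkm) (Ne.symm hlm) (by rw [hT]; ext x; simp; tauto) h2kl
    · rw [if_neg hiT]
      have hTsub : T ⊆ Finset.univ.erase i := by
        intro x hx
        exact Finset.mem_erase.mpr ⟨fun e => hiT (e ▸ hx), Finset.mem_univ _⟩
      rw [brAi, myRatio α hα (Finset.univ.erase i) T hTsub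
        (fun x hx j _ hxj => hcop' x j (Finset.mem_sdiff.mp hx).2 hxj), hT4]
  -- the sum
  have hcardT : T.card = 3 := by
    rw [hT, Finset.card_insert_of_notMem hkT, Finset.card_insert_of_notMem hlT,
      Finset.card_singleton]
  have hsum : ∑ i, (brAi n α i : ℚ) = 2 * 3 + 4 * ((n : ℚ) - 3) := by
    calc ∑ i, (brAi n α i : ℚ)
        = ∑ i, (if i ∈ T then (2 : ℚ) else 4) := by
          refine Finset.sum_congr rfl fun i _ => ?_
          rw [hAi i]
          split <;> norm_num
      _ = ∑ i ∈ Finset.univ.filter (· ∈ T), (2 : ℚ)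
            + ∑ i ∈ Finset.univ.filter (· ∉ T), (4 : ℚ) := Finset.sum_ite _ _
      _ = 2 * 3 + 4 * ((n : ℚ) - 3) := by
          rw [Finset.sum_const, Finset.sum_const]
          have h1 : Finset.univ.filter (· ∈ T) = T := by
            ext x; simp
          have h2 : Finset.univ.filter (· ∉ T) = Finset.univ \ T := by
            ext x; simp
          rw [h1, h2, hcardT, Finset.card_sdiff_of_subset (Finset.subset_univ T), hcardT,
            Finset.card_univ, Fintype.card_fin]
          rw [nsmul_eq_mul, nsmul_eq_mul]
          push_cast [Nat.cast_sub hn]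
          ring
  rw [genusEq, hA, hsum]
  push_cast
  ring
end

section
/- Let n ≥ 2 and let α₁,…,α_n be positive integers. Suppose there are two indices k ≠ l such that gcd(α_i,α_j) = 1 for every pair i ≠ j with {i,j} ≠ {k,l}, and write B = gcd(α_k,α_l). Then ∏_{i=1}^n α_i = B · lcm(α₁,…,α_n); consequently A = B, A_k = A_l = 1, and A_i = B for every index i ∉ {k,l}. -/
lemma lcm_eq_prod_aux {ι : Type*} [DecidableEq ι] (α : ι → ℕ) (s : Finset ι)
    (h : ∀ a ∈ s, ∀ b ∈ s, a ≠ b → Nat.Coprime (α a) (α b)) :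
    s.lcm α = ∏ i ∈ s, α i := by
  induction s using Finset.induction with
  | empty => simp
  | @insert a s ha ih =>
    rw [Finset.lcm_insert, Finset.prod_insert ha,
      ih (fun x hx y hy hxy => h x (Finset.mem_insert_of_mem hx) y
        (Finset.mem_insert_of_mem hy) hxy)]
    exact Nat.Coprime.lcm_eq_mul (Nat.Coprime.prod_right fun x hx =>
      h a (Finset.mem_insert_self a s) x (Finset.mem_insert_of_mem hx)
        (fun e => ha (e ▸ hx)))

lemma key_aux {ι : Type*} [DecidableEq ι] (α : ι → ℕ) (s : Finset ι) (k l : ι)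
    (hk : k ∈ s) (hl : l ∈ s) (hkl : k ≠ l) (hpos : ∀ i ∈ s, 0 < α i)
    (hcop : ∀ a ∈ s, ∀ b ∈ s, a ≠ b → ¬(a = k ∧ b = l) → ¬(a = l ∧ b = k) →
      Nat.Coprime (α a) (α b)) :
    ∏ i ∈ s, α i = Nat.gcd (α k) (α l) * s.lcm α := by
  set t := (s.erase k).erase l with ht
  have hlk : l ∈ s.erase k := Finset.mem_erase.2 ⟨Ne.symm hkl, hl⟩
  have hkt : k ∉ insert l t := by
    simp [ht, Finset.mem_erase, hkl]
  have hlt : l ∉ t := by simp [ht]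
  have hmem : ∀ x ∈ t, x ∈ s ∧ x ≠ k ∧ x ≠ l := by
    intro x hx
    simp only [ht, Finset.mem_erase] at hx
    exact ⟨hx.2.2, hx.2.1, hx.1⟩
  have hs : s = insert k (insert l t) := by
    rw [Finset.insert_erase hlk, Finset.insert_erase hk]
  have htlcm : t.lcm α = ∏ i ∈ t, α i := by
    apply lcm_eq_prod_aux
    intro a ha b hb hab
    obtain ⟨has, hak, hal⟩ := hmem a ha
    obtain ⟨hbs, hbk, hbl⟩ := hmem b hb
    exact hcop a has b hbs hab (fun e => hak e.1) (fun e => hal e.1)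
  set P := ∏ i ∈ t, α i with hP
  have hcopkP : Nat.Coprime (α k) P := by
    apply Nat.Coprime.prod_right
    intro x hx
    obtain ⟨hxs, hxk, hxl⟩ := hmem x hx
    exact hcop k hk x hxs (Ne.symm hxk) (fun e => hxl e.2)
      (fun e => hkl e.1)
  have hcoplP : Nat.Coprime (α l) P := by
    apply Nat.Coprime.prod_right
    intro x hx
    obtain ⟨hxs, hxk, hxl⟩ := hmem x hx
    exact hcop l hl x hxs (Ne.symm hxl) (fun e => hkl e.1.symm)
      (fun e => hxk e.2)
  rw [hs, Finset.prod_insert hkt, Finset.prod_insert hlt,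
    Finset.lcm_insert, Finset.lcm_insert, htlcm, ← hP]
  show α k * (α l * P) = Nat.gcd (α k) (α l) * Nat.lcm (α k) (Nat.lcm (α l) P)
  rw [Nat.Coprime.lcm_eq_mul hcoplP]
  have hgpos : 0 < Nat.gcd (α k) (α l) :=
    Nat.gcd_pos_of_pos_left _ (hpos k hk)
  have hcancel : Nat.gcd (α k) (α l) * Nat.lcm (α k) (α l * P) =
      Nat.gcd (α k) (α l) * (Nat.lcm (α k) (α l) * P) := by
    have h1 : Nat.gcd (α k) (α l * P) = Nat.gcd (α k) (α l) :=
      Nat.Coprime.gcd_mul_right_cancel_right _ hcopkP.symm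
    calc Nat.gcd (α k) (α l) * Nat.lcm (α k) (α l * P)
        = Nat.gcd (α k) (α l * P) * Nat.lcm (α k) (α l * P) := by rw [h1]
      _ = α k * (α l * P) := Nat.gcd_mul_lcm _ _
      _ = (α k * α l) * P := by ring
      _ = (Nat.gcd (α k) (α l) * Nat.lcm (α k) (α l)) * P := by
          rw [Nat.gcd_mul_lcm]
      _ = Nat.gcd (α k) (α l) * (Nat.lcm (α k) (α l) * P) := by ring
  have hx := Nat.eq_of_mul_eq_mul_left hgpos hcancel
  rw [hx]
  calc α k * (α l * P) = (Nat.gcd (α k) (α l) * Nat.lcm (α k) (α l)) * P := by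
        rw [Nat.gcd_mul_lcm]; ring
    _ = Nat.gcd (α k) (α l) * (Nat.lcm (α k) (α l) * P) := by ring

theorem single_pair_values (n : ℕ) (hn : 2 ≤ n) (α : Fin n → ℕ)
    (hα : ∀ i, 0 < α i) (k l : Fin n) (hkl : k ≠ l)
    (h : ∀ i j : Fin n, i ≠ j → ({i, j} : Finset (Fin n)) ≠ {k, l} →
      Nat.gcd (α i) (α j) = 1) :
    (∏ i, α i) = Nat.gcd (α k) (α l) * Finset.univ.lcm α ∧
    brA n α = Nat.gcd (α k) (α l) ∧
    brAi n α k = 1 ∧ brAi n α l = 1 ∧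
    ∀ i : Fin n, i ≠ k → i ≠ l → brAi n α i = Nat.gcd (α k) (α l) := by
  have hpair : ∀ i j : Fin n, i ≠ j → ¬(i = k ∧ j = l) → ¬(i = l ∧ j = k) →
      Nat.Coprime (α i) (α j) := by
    intro i j hij h1 h2
    apply h i j hij
    intro e
    have hi : i = k ∨ i = l := by
      have : i ∈ ({k, l} : Finset (Fin n)) := e ▸ (by simp)
      simpa using this
    have hj : j = k ∨ j = l := by
      have : j ∈ ({k, l} : Finset (Fin n)) := e ▸ (by simp)
      simpa using this
    rcases hi with hi | hi <;> rcases hj with hj | hj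
    · exact hij (hi.trans hj.symm)
    · exact h1 ⟨hi, hj⟩
    · exact h2 ⟨hi, hj⟩
    · exact hij (hi.trans hj.symm)
  have hmain : ∏ i, α i = Nat.gcd (α k) (α l) * Finset.univ.lcm α :=
    key_aux α Finset.univ k l (Finset.mem_univ k) (Finset.mem_univ l) hkl
      (fun i _ => hα i) (fun a _ b _ hab => hpair a b hab)
  have hgpos : 0 < Nat.gcd (α k) (α l) := Nat.gcd_pos_of_pos_left _ (hα k)
  have hprodpos : 0 < ∏ i, α i := Finset.prod_pos fun i _ => hα i
  have hlcmpos : 0 < Finset.univ.lcm α := by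
    rcases Nat.eq_zero_or_pos (Finset.univ.lcm α) with h0 | h0
    · rw [h0, mul_zero] at hmain; omega
    · exact h0
  refine ⟨hmain, ?_, ?_, ?_, ?_⟩
  · rw [brA, hmain, Nat.mul_div_cancel _ hlcmpos]
  · rw [brAi]
    have : (Finset.univ.erase k).lcm α = ∏ j ∈ Finset.univ.erase k, α j := by
      apply lcm_eq_prod_aux
      intro a ha b hb hab
      exact hpair a b hab (fun e => (Finset.mem_erase.1 ha).1 e.1)
        (fun e => (Finset.mem_erase.1 hb).1 e.2)
    rw [this, Nat.div_self (Finset.prod_pos fun i _ => hα i)]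
  · rw [brAi]
    have : (Finset.univ.erase l).lcm α = ∏ j ∈ Finset.univ.erase l, α j := by
      apply lcm_eq_prod_aux
      intro a ha b hb hab
      exact hpair a b hab (fun e => (Finset.mem_erase.1 hb).1 e.2)
        (fun e => (Finset.mem_erase.1 ha).1 e.1)
    rw [this, Nat.div_self (Finset.prod_pos fun i _ => hα i)]
  · intro i hik hil
    rw [brAi]
    have hmem : ∀ x : Fin n, x ≠ i → x ∈ Finset.univ.erase i := by
      intro x hx; exact Finset.mem_erase.2 ⟨hx, Finset.mem_univ x⟩
    have heq := key_aux α (Finset.univ.erase i) k l (hmem k (Ne.symm hik))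
      (hmem l (Ne.symm hil)) hkl (fun j _ => hα j)
      (fun a _ b _ hab => hpair a b hab)
    have hppos : 0 < ∏ j ∈ Finset.univ.erase i, α j :=
      Finset.prod_pos fun j _ => hα j
    have hlpos : 0 < (Finset.univ.erase i).lcm α := by
      rcases Nat.eq_zero_or_pos ((Finset.univ.erase i).lcm α) with h0 | h0
      · rw [h0, mul_zero] at heq; omega
      · exact h0
    rw [heq, Nat.mul_div_cancel _ hlpos]
end

section
/- Let n ≥ 3 and let α₁,…,α_n be positive integers. Suppose there are three distinct indices k, l, m with gcd(α_k,α_l) = gcd(α_l,α_m) = gcd(α_k,α_m) = 2, and gcd(α_i,α_j) = 1 for every pair i ≠ j not contained in {k,l,m}. Then ∏_{i=1}^n α_i = 4 · lcm(α₁,…,α_n); consequently A = 4, A_k = A_l = A_m = 2, and A_i = 4 for every index i ∉ {k,l,m}. -/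
/-- Pairwise coprime divisors: product divides. -/
lemma aux_prod_dvd {ι : Type*} [DecidableEq ι] (s : Finset ι) (β : ι → ℕ) (N : ℕ)
    (hcop : ∀ i ∈ s, ∀ j ∈ s, i ≠ j → Nat.Coprime (β i) (β j))
    (hdvd : ∀ i ∈ s, β i ∣ N) : (∏ i ∈ s, β i) ∣ N := by
  induction s using Finset.cons_induction with
  | empty => simpa using one_dvd N
  | cons a t ha ih =>
    rw [Finset.prod_cons]
    refine Nat.Coprime.mul_dvd_of_dvd_of_dvd ?_ (hdvd a (by simp)) ?_
    · exact Nat.Coprime.prod_right fun i hi =>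
        hcop a (by simp) i (by simp [hi]) (by rintro rfl; exact ha hi)
    · exact ih (fun i hi j hj hij => hcop i (by simp [hi]) j (by simp [hj]) hij)
        (fun i hi => hdvd i (by simp [hi]))

/-- Key lcm computation. -/
lemma aux_lcm {ι : Type*} [DecidableEq ι] (s : Finset ι) (β γ : ι → ℕ)
    (hpos : ∀ i ∈ s, 0 < β i)
    (hcop : ∀ i ∈ s, ∀ j ∈ s, i ≠ j → Nat.Coprime (β i) (β j))
    (hγ : ∀ i ∈ s, γ i = β i ∨ γ i = 2 * β i)
    (h4 : ∀ i ∈ s, 2 ∣ β i → γ i = 2 * β i)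
    (h3 : ∃ a ∈ s, γ a = 2 * β a) :
    s.lcm γ = 2 * ∏ i ∈ s, β i := by
  apply Nat.dvd_antisymm
  · apply Finset.lcm_dvd
    intro i hi
    rcases hγ i hi with hh | hh
    · rw [hh]; exact Dvd.dvd.mul_left (Finset.dvd_prod_of_mem β hi) 2
    · rw [hh]; exact mul_dvd_mul_left 2 (Finset.dvd_prod_of_mem β hi)
  · obtain ⟨a, ha, hγa, hodd⟩ : ∃ a ∈ s, γ a = 2 * β a ∧ ∀ i ∈ s, i ≠ a → ¬ 2 ∣ β i := by
      by_cases he : ∃ e ∈ s, 2 ∣ β e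
      · obtain ⟨e, hes, hed⟩ := he
        refine ⟨e, hes, h4 e hes hed, fun i hi hne hdi => ?_⟩
        have := Nat.dvd_gcd hdi hed
        rw [hcop i hi e hes hne] at this
        omega
      · obtain ⟨a, has, hγa⟩ := h3
        exact ⟨a, has, hγa, fun i hi _ hdi => he ⟨i, hi, hdi⟩⟩
    rw [← Finset.mul_prod_erase s β ha, ← mul_assoc]
    have hprodvd : (∏ i ∈ s.erase a, β i) ∣ s.lcm γ := by
      apply aux_prod_dvd
      · intro i hi j hj hij
        exact hcop i (Finset.mem_of_mem_erase hi) j (Finset.mem_of_mem_erase hj) hij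
      · intro i hi
        have hi' := Finset.mem_of_mem_erase hi
        have : β i ∣ γ i := by rcases hγ i hi' with hh | hh <;> simp [hh]
        exact this.trans (Finset.dvd_lcm hi')
    refine Nat.Coprime.mul_dvd_of_dvd_of_dvd ?_ (hγa ▸ Finset.dvd_lcm ha) hprodvd
    -- coprime (2 * β a) (∏ erase)
    refine Nat.coprime_mul_iff_left.mpr ⟨?_, ?_⟩
    · -- coprime 2 prod
      apply Nat.Coprime.prod_right
      intro i hi
      exact (Nat.Prime.coprime_iff_not_dvd Nat.prime_two).mpr
        (hodd i (Finset.mem_of_mem_erase hi) (Finset.ne_of_mem_erase hi))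
    · exact Nat.Coprime.prod_right fun i hi =>
        hcop a ha i (Finset.mem_of_mem_erase hi) (Finset.ne_of_mem_erase hi).symm

theorem triple_values (n : ℕ) (hn : 3 ≤ n) (α : Fin n → ℕ)
    (hα : ∀ i, 0 < α i) (k l m : Fin n) (hkl : k ≠ l) (hlm : l ≠ m) (hkm : k ≠ m)
    (h2kl : Nat.gcd (α k) (α l) = 2) (h2lm : Nat.gcd (α l) (α m) = 2)
    (h2km : Nat.gcd (α k) (α m) = 2)
    (h : ∀ i j : Fin n, i ≠ j → ¬({i, j} : Finset (Fin n)) ⊆ {k, l, m} →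
      Nat.gcd (α i) (α j) = 1) :
    (∏ i, α i) = 4 * Finset.univ.lcm α ∧
    brA n α = 4 ∧
    brAi n α k = 2 ∧ brAi n α l = 2 ∧ brAi n α m = 2 ∧
    ∀ i : Fin n, i ≠ k → i ≠ l → i ≠ m → brAi n α i = 4 := by
  classical
  set P : Fin n → Prop := fun i => i = k ∨ i = l ∨ i = m with hP
  set β : Fin n → ℕ := fun i => if P i then α i / 2 else α i with hβ
  have h2k : 2 ∣ α k := h2kl ▸ Nat.gcd_dvd_left _ _
  have h2l : 2 ∣ α l := h2kl ▸ Nat.gcd_dvd_right _ _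
  have h2m : 2 ∣ α m := h2lm ▸ Nat.gcd_dvd_right _ _
  have h2 : ∀ i, P i → 2 ∣ α i := by rintro i (rfl | rfl | rfl) <;> assumption
  have hdouble : ∀ i, P i → α i = 2 * β i := by
    intro i hi
    simp only [hβ, if_pos hi]
    exact (Nat.mul_div_cancel' (h2 i hi)).symm
  have heq : ∀ i, ¬ P i → β i = α i := by intro i hi; simp only [hβ, if_neg hi]
  have hβpos : ∀ i, 0 < β i := by
    intro i
    by_cases hi : P i
    · have := hdouble i hi; have := hα i; omega
    · rw [heq i hi]; exact hα i
  have hβdvd : ∀ i, β i ∣ α i := by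
    intro i
    by_cases hi : P i
    · exact ⟨2, by have := hdouble i hi; omega⟩
    · rw [heq i hi]
  have hcopα : ∀ i j, i ≠ j → (¬ P i ∨ ¬ P j) → Nat.gcd (α i) (α j) = 1 := by
    intro i j hij hnp
    apply h i j hij
    intro hsub
    rcases hnp with hnp | hnp
    · exact hnp (by simpa [hP] using hsub (Finset.mem_insert_self i {j}))
    · exact hnp (by simpa [hP] using hsub (by simp))
  have hg2 : ∀ i j, P i → P j → i ≠ j → Nat.gcd (α i) (α j) = 2 := by
    rintro i j (rfl | rfl | rfl) (rfl | rfl | rfl) hij <;>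
      first
        | exact absurd rfl hij
        | assumption
        | (rw [Nat.gcd_comm]; assumption)
  have hcopβ : ∀ i j, i ≠ j → Nat.Coprime (β i) (β j) := by
    intro i j hij
    by_cases hi : P i
    · by_cases hj : P j
      · have hgi := hg2 i j hi hj hij
        rw [hdouble i hi, hdouble j hj, Nat.gcd_mul_left] at hgi
        unfold Nat.Coprime
        omega
      · exact Nat.Coprime.coprime_dvd_left (hβdvd i)
          (Nat.Coprime.coprime_dvd_right (hβdvd j) (hcopα i j hij (Or.inr hj)))
    · exact Nat.Coprime.coprime_dvd_left (hβdvd i)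
        (Nat.Coprime.coprime_dvd_right (hβdvd j) (hcopα i j hij (Or.inl hi)))
  have h4β : ∀ i, 2 ∣ β i → α i = 2 * β i := by
    intro i hdi
    by_cases hi : P i
    · exact hdouble i hi
    · exfalso
      have hik : i ≠ k := by intro hh; exact hi (Or.inl hh)
      have hg := hcopα i k hik (Or.inl hi)
      rw [heq i hi] at hdi
      have := Nat.dvd_gcd hdi h2k
      omega
  -- the two generic computations, for any subset s
  have key : ∀ s : Finset (Fin n), (∃ a ∈ s, P a) →
      s.lcm α = 2 * ∏ i ∈ s, β i := by
    intro s ⟨a, has, hPa⟩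
    apply aux_lcm s β α (fun i _ => hβpos i)
      (fun i _ j _ hij => hcopβ i j hij)
    · intro i _
      by_cases hi : P i
      · exact Or.inr (hdouble i hi)
      · exact Or.inl (heq i hi).symm
    · exact fun i _ hdi => h4β i hdi
    · exact ⟨a, has, hdouble a hPa⟩
  have keyP : ∀ s : Finset (Fin n),
      ∏ i ∈ s, α i = 2 ^ (s.filter P).card * ∏ i ∈ s, β i := by
    intro s
    calc ∏ i ∈ s, α i = ∏ i ∈ s, ((if P i then 2 else 1) * β i) := by
          refine Finset.prod_congr rfl fun i _ => ?_
          by_cases hi : P i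
          · rw [if_pos hi]; exact hdouble i hi
          · rw [if_neg hi, one_mul, heq i hi]
      _ = (∏ i ∈ s, if P i then 2 else 1) * ∏ i ∈ s, β i := Finset.prod_mul_distrib
      _ = 2 ^ (s.filter P).card * ∏ i ∈ s, β i := by
          rw [Finset.prod_ite, Finset.prod_const, Finset.prod_const, one_pow, mul_one]
  -- cardinalities of the filters
  have cardklm : ({k, l, m} : Finset (Fin n)).card = 3 := by
    rw [Finset.card_insert_of_notMem (by simp [hkl, hkm]),
      Finset.card_insert_of_notMem (by simp [hlm]), Finset.card_singleton]
  have card_univ : ((Finset.univ : Finset (Fin n)).filter P).card = 3 := by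
    have : (Finset.univ : Finset (Fin n)).filter P = {k, l, m} := by
      ext i; simp [hP, Finset.mem_insert]
    rw [this, cardklm]
  -- erase computations for the three doubled indices
  have cardpair : ∀ a b : Fin n, a ≠ b → ({a, b} : Finset (Fin n)).card = 2 := by
    intro a b hab
    rw [Finset.card_insert_of_notMem (by simp [hab]), Finset.card_singleton]
  have card_erase_k : ((Finset.univ.erase k).filter P).card = 2 := by
    have : (Finset.univ.erase k).filter P = {l, m} := by
      ext i
      simp only [hP, Finset.mem_filter, Finset.mem_erase, Finset.mem_univ, true_and, and_true,
        Finset.mem_insert, Finset.mem_singleton]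
      constructor
      · rintro ⟨hne, (rfl | rfl | rfl)⟩
        · exact absurd rfl hne
        · exact Or.inl rfl
        · exact Or.inr rfl
      · rintro (rfl | rfl)
        · exact ⟨hkl.symm, Or.inr (Or.inl rfl)⟩
        · exact ⟨hkm.symm, Or.inr (Or.inr rfl)⟩
    rw [this, cardpair l m hlm]
  have card_erase_l : ((Finset.univ.erase l).filter P).card = 2 := by
    have : (Finset.univ.erase l).filter P = {k, m} := by
      ext i
      simp only [hP, Finset.mem_filter, Finset.mem_erase, Finset.mem_univ, true_and, and_true,
        Finset.mem_insert, Finset.mem_singleton]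
      constructor
      · rintro ⟨hne, (rfl | rfl | rfl)⟩
        · exact Or.inl rfl
        · exact absurd rfl hne
        · exact Or.inr rfl
      · rintro (rfl | rfl)
        · exact ⟨hkl, Or.inl rfl⟩
        · exact ⟨hlm.symm, Or.inr (Or.inr rfl)⟩
    rw [this, cardpair k m hkm]
  have card_erase_m : ((Finset.univ.erase m).filter P).card = 2 := by
    have : (Finset.univ.erase m).filter P = {k, l} := by
      ext i
      simp only [hP, Finset.mem_filter, Finset.mem_erase, Finset.mem_univ, true_and, and_true,
        Finset.mem_insert, Finset.mem_singleton]
      constructor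
      · rintro ⟨hne, (rfl | rfl | rfl)⟩
        · exact Or.inl rfl
        · exact Or.inr rfl
        · exact absurd rfl hne
      · rintro (rfl | rfl)
        · exact ⟨hkm, Or.inl rfl⟩
        · exact ⟨hlm, Or.inr (Or.inl rfl)⟩
    rw [this, cardpair k l hkl]
  have card_erase_out : ∀ x : Fin n, ¬ P x →
      ((Finset.univ.erase x).filter P).card = 3 := by
    intro x hx
    have : (Finset.univ.erase x).filter P = {k, l, m} := by
      ext i
      simp only [Finset.mem_filter, Finset.mem_erase, Finset.mem_univ, true_and, and_true,
        Finset.mem_insert, Finset.mem_singleton, hP]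
      constructor
      · exact fun hh => hh.2
      · intro hi
        refine ⟨?_, hi⟩
        rintro rfl
        exact hx hi
    rw [this, cardklm]
  have Pk : P k := Or.inl rfl
  have Pl : P l := Or.inr (Or.inl rfl)
  have Pm : P m := Or.inr (Or.inr rfl)
  -- generic brAi computation
  have hbrAi : ∀ x : Fin n, ∀ a ∈ Finset.univ.erase x, P a →
      brAi n α x = 2 ^ (((Finset.univ.erase x).filter P).card - 1) := by
    intro x a ha hPa
    have hL := key (Finset.univ.erase x) ⟨a, ha, hPa⟩
    have hB : 0 < ∏ i ∈ Finset.univ.erase x, β i :=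
      Finset.prod_pos fun i _ => hβpos i
    have hc : 1 ≤ ((Finset.univ.erase x).filter P).card := by
      rw [Nat.succ_le_iff, Finset.card_pos]
      exact ⟨a, Finset.mem_filter.mpr ⟨ha, hPa⟩⟩
    unfold brAi
    rw [keyP, hL]
    rw [show (2:ℕ) ^ ((Finset.univ.erase x).filter P).card
        = 2 ^ (((Finset.univ.erase x).filter P).card - 1) * 2 by
      rw [← pow_succ]; congr 1; omega]
    rw [mul_assoc, Nat.mul_div_cancel _ (by positivity)]
  have hLuniv := key Finset.univ ⟨k, Finset.mem_univ k, Pk⟩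
  have hBuniv : 0 < ∏ i, β i := Finset.prod_pos fun i _ => hβpos i
  have main : (∏ i, α i) = 4 * Finset.univ.lcm α := by
    rw [keyP, card_univ, hLuniv]; ring
  refine ⟨main, ?_, ?_, ?_, ?_, ?_⟩
  · unfold brA
    rw [main, Nat.mul_div_cancel _ (by rw [hLuniv]; positivity)]
  · rw [hbrAi k l (Finset.mem_erase.mpr ⟨hkl.symm, Finset.mem_univ l⟩) Pl,
      card_erase_k]
    norm_num
  · rw [hbrAi l k (Finset.mem_erase.mpr ⟨hkl, Finset.mem_univ k⟩) Pk,
      card_erase_l]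
    norm_num
  · rw [hbrAi m k (Finset.mem_erase.mpr ⟨hkm, Finset.mem_univ k⟩) Pk,
      card_erase_m]
    norm_num
  · intro i hik hil him
    have hPi : ¬ P i := by rintro (rfl | rfl | rfl) <;> tauto
    rw [hbrAi i k (Finset.mem_erase.mpr ⟨fun hh => hik hh.symm, Finset.mem_univ k⟩) Pk,
      card_erase_out i hPi]
    norm_num
end

section
/- Let n ≥ 4 and let α₁,…,α_n be positive integers. Let j, k, l, m be four pairwise distinct indices and set B = gcd(α_j,α_k) and C = gcd(α_l,α_m). Then: B·C divides A; C divides A_j and A_k; B divides A_l and A_m; B·C divides A_i for every index i ∉ {j,k,l,m}; moreover B divides A/A_j and A/A_k, and C divides A/A_l and A/A_m (all these quotients being integers since A_i divides A). -/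
lemma lcm_mul_gcd_dvd_prod {n : ℕ} (α : Fin n → ℕ) (s : Finset (Fin n))
    {j k : Fin n} (hj : j ∈ s) (hk : k ∈ s) (hjk : j ≠ k) :
    s.lcm α * Nat.gcd (α j) (α k) ∣ ∏ i ∈ s, α i := by
  set t := (s.erase j).erase k with ht
  have hk' : k ∈ s.erase j := Finset.mem_erase.mpr ⟨hjk.symm, hk⟩
  have hprod : ∏ i ∈ s, α i = α j * (α k * ∏ i ∈ t, α i) := by
    rw [Finset.mul_prod_erase _ _ hk', Finset.mul_prod_erase _ _ hj]
  have hlcm : s.lcm α ∣ Nat.lcm (α j) (α k) * ∏ i ∈ t, α i := by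
    apply Finset.lcm_dvd
    intro i hi
    by_cases h1 : i = j
    · subst h1; exact dvd_mul_of_dvd_left (Nat.dvd_lcm_left _ _) _
    by_cases h2 : i = k
    · subst h2; exact dvd_mul_of_dvd_left (Nat.dvd_lcm_right _ _) _
    · exact dvd_mul_of_dvd_right
        (Finset.dvd_prod_of_mem α (by simp [ht, Finset.mem_erase, h1, h2, hi])) _
  calc s.lcm α * Nat.gcd (α j) (α k)
      ∣ (Nat.lcm (α j) (α k) * ∏ i ∈ t, α i) * Nat.gcd (α j) (α k) :=
        mul_dvd_mul_right hlcm _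
    _ = ∏ i ∈ s, α i := by
        rw [hprod, mul_comm, ← mul_assoc, Nat.gcd_mul_lcm]; ring

lemma lcm_mul_gcd_gcd_dvd_prod {n : ℕ} (α : Fin n → ℕ) (s : Finset (Fin n))
    {j k l m : Fin n} (hj : j ∈ s) (hk : k ∈ s) (hl : l ∈ s) (hm : m ∈ s)
    (hjk : j ≠ k) (hjl : j ≠ l) (hjm : j ≠ m) (hkl : k ≠ l) (hkm : k ≠ m)
    (hlm : l ≠ m) :
    s.lcm α * (Nat.gcd (α j) (α k) * Nat.gcd (α l) (α m)) ∣ ∏ i ∈ s, α i := by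
  set t := (((s.erase j).erase k).erase l).erase m with ht
  have hk' : k ∈ s.erase j := Finset.mem_erase.mpr ⟨hjk.symm, hk⟩
  have hl' : l ∈ (s.erase j).erase k := by
    simp [Finset.mem_erase, hjl.symm, hkl.symm, hl]
  have hm' : m ∈ ((s.erase j).erase k).erase l := by
    simp [Finset.mem_erase, hjm.symm, hkm.symm, hlm.symm, hm]
  have hprod : ∏ i ∈ s, α i = α j * (α k * (α l * (α m * ∏ i ∈ t, α i))) := by
    rw [Finset.mul_prod_erase _ _ hm', Finset.mul_prod_erase _ _ hl',
      Finset.mul_prod_erase _ _ hk', Finset.mul_prod_erase _ _ hj]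
  have hlcm : s.lcm α ∣ Nat.lcm (α j) (α k) * (Nat.lcm (α l) (α m) * ∏ i ∈ t, α i) := by
    apply Finset.lcm_dvd
    intro i hi
    by_cases h1 : i = j
    · subst h1; exact dvd_mul_of_dvd_left (Nat.dvd_lcm_left _ _) _
    by_cases h2 : i = k
    · subst h2; exact dvd_mul_of_dvd_left (Nat.dvd_lcm_right _ _) _
    by_cases h3 : i = l
    · subst h3; exact dvd_mul_of_dvd_right (dvd_mul_of_dvd_left (Nat.dvd_lcm_left _ _) _) _
    by_cases h4 : i = m
    · subst h4; exact dvd_mul_of_dvd_right (dvd_mul_of_dvd_left (Nat.dvd_lcm_right _ _) _) _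
    · exact dvd_mul_of_dvd_right (dvd_mul_of_dvd_right
        (Finset.dvd_prod_of_mem α (by simp [ht, Finset.mem_erase, h1, h2, h3, h4, hi])) _) _
  calc s.lcm α * (Nat.gcd (α j) (α k) * Nat.gcd (α l) (α m))
      ∣ (Nat.lcm (α j) (α k) * (Nat.lcm (α l) (α m) * ∏ i ∈ t, α i)) *
        (Nat.gcd (α j) (α k) * Nat.gcd (α l) (α m)) := mul_dvd_mul_right hlcm _
    _ = (Nat.gcd (α j) (α k) * Nat.lcm (α j) (α k)) *
        ((Nat.gcd (α l) (α m) * Nat.lcm (α l) (α m)) * ∏ i ∈ t, α i) := by ring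
    _ = ∏ i ∈ s, α i := by rw [Nat.gcd_mul_lcm, Nat.gcd_mul_lcm, hprod]; ring

lemma gcd_dvd_brAi {n : ℕ} (α : Fin n → ℕ) {a b c : Fin n}
    (hab : a ≠ b) (hac : a ≠ c) (hbc : b ≠ c) :
    Nat.gcd (α b) (α c) ∣ brAi n α a := by
  have hb : b ∈ Finset.univ.erase a := Finset.mem_erase.mpr ⟨hab.symm, Finset.mem_univ _⟩
  have hc : c ∈ Finset.univ.erase a := Finset.mem_erase.mpr ⟨hac.symm, Finset.mem_univ _⟩
  have hL : (Finset.univ.erase a).lcm α ∣ ∏ i ∈ Finset.univ.erase a, α i :=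
    Finset.lcm_dvd fun i hi => Finset.dvd_prod_of_mem α hi
  rw [brAi, Nat.dvd_div_iff_mul_dvd hL]
  exact lcm_mul_gcd_dvd_prod α _ hb hc hbc

lemma gcd_mul_brAi_dvd_brA {n : ℕ} (α : Fin n → ℕ) (hα : ∀ i, 0 < α i) {a b : Fin n}
    (hab : a ≠ b) :
    Nat.gcd (α a) (α b) * brAi n α a ∣ brA n α := by
  set s : Finset (Fin n) := Finset.univ.erase a with hs
  set Lj : ℕ := s.lcm α with hLj
  set Pj : ℕ := ∏ i ∈ s, α i with hPj
  have hb : b ∈ s := Finset.mem_erase.mpr ⟨hab.symm, Finset.mem_univ _⟩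
  have hLjPj : Lj ∣ Pj := Finset.lcm_dvd fun i hi => Finset.dvd_prod_of_mem α hi
  have hLP : Finset.univ.lcm α ∣ ∏ i, α i :=
    Finset.lcm_dvd fun i hi => Finset.dvd_prod_of_mem α hi
  have hL : Finset.univ.lcm α = Nat.lcm (α a) Lj := by
    conv_lhs => rw [← Finset.insert_erase (Finset.mem_univ a)]
    rw [Finset.lcm_insert, lcm_eq_nat_lcm, hLj, hs]
  have hPsplit : (∏ i, α i) = α a * Pj :=
    (Finset.mul_prod_erase Finset.univ α (Finset.mem_univ a)).symm
  set g : ℕ := Nat.gcd (α a) Lj with hg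
  have hBg : Nat.gcd (α a) (α b) ∣ g :=
    Nat.dvd_gcd (Nat.gcd_dvd_left _ _)
      ((Nat.gcd_dvd_right _ _).trans (Finset.dvd_lcm hb))
  have hkey : g * (Pj / Lj) * Finset.univ.lcm α = ∏ i, α i := by
    rw [hL, mul_comm g, mul_assoc, Nat.gcd_mul_lcm, hPsplit, ← mul_assoc,
      mul_comm (Pj / Lj), mul_assoc, Nat.div_mul_cancel hLjPj]
  rw [brA, brAi, ← hs, ← hPj, ← hLj, Nat.dvd_div_iff_mul_dvd hLP, mul_comm]
  calc Nat.gcd (α a) (α b) * (Pj / Lj) * Finset.univ.lcm α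
      ∣ g * (Pj / Lj) * Finset.univ.lcm α :=
        mul_dvd_mul_right (mul_dvd_mul_right hBg _) _
    _ = ∏ i, α i := hkey

lemma gcd_dvd_quot {n : ℕ} (α : Fin n → ℕ) (hα : ∀ i, 0 < α i) {a b : Fin n}
    (hab : a ≠ b) :
    Nat.gcd (α a) (α b) ∣ brA n α / brAi n α a := by
  have h := gcd_mul_brAi_dvd_brA α hα hab
  have hAi : brAi n α a ∣ brA n α := (dvd_mul_left _ _).trans h
  rw [Nat.dvd_div_iff_mul_dvd hAi, mul_comm]
  exact h

theorem two_disjoint_pairs_divisibility (n : ℕ) (hn : 4 ≤ n) (α : Fin n → ℕ)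
    (hα : ∀ i, 0 < α i) (j k l m : Fin n)
    (hjk : j ≠ k) (hjl : j ≠ l) (hjm : j ≠ m) (hkl : k ≠ l) (hkm : k ≠ m)
    (hlm : l ≠ m) :
    Nat.gcd (α j) (α k) * Nat.gcd (α l) (α m) ∣ brA n α ∧
    Nat.gcd (α l) (α m) ∣ brAi n α j ∧
    Nat.gcd (α l) (α m) ∣ brAi n α k ∧
    Nat.gcd (α j) (α k) ∣ brAi n α l ∧
    Nat.gcd (α j) (α k) ∣ brAi n α m ∧
    (∀ i : Fin n, i ≠ j → i ≠ k → i ≠ l → i ≠ m →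
      Nat.gcd (α j) (α k) * Nat.gcd (α l) (α m) ∣ brAi n α i) ∧
    Nat.gcd (α j) (α k) ∣ brA n α / brAi n α j ∧
    Nat.gcd (α j) (α k) ∣ brA n α / brAi n α k ∧
    Nat.gcd (α l) (α m) ∣ brA n α / brAi n α l ∧
    Nat.gcd (α l) (α m) ∣ brA n α / brAi n α m := by
  refine ⟨?_, gcd_dvd_brAi α hjl hjm hlm, gcd_dvd_brAi α hkl hkm hlm,
    gcd_dvd_brAi α hjl.symm hkl.symm hjk, gcd_dvd_brAi α hjm.symm hkm.symm hjk,
    ?_, gcd_dvd_quot α hα hjk, ?_, gcd_dvd_quot α hα hlm, ?_⟩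
  · have hLP : Finset.univ.lcm α ∣ ∏ i, α i :=
      Finset.lcm_dvd fun i hi => Finset.dvd_prod_of_mem α hi
    rw [brA, Nat.dvd_div_iff_mul_dvd hLP]
    exact lcm_mul_gcd_gcd_dvd_prod α _ (Finset.mem_univ j) (Finset.mem_univ k)
      (Finset.mem_univ l) (Finset.mem_univ m) hjk hjl hjm hkl hkm hlm
  · intro i hij hik hil him
    have hLP : (Finset.univ.erase i).lcm α ∣ ∏ x ∈ Finset.univ.erase i, α x :=
      Finset.lcm_dvd fun x hx => Finset.dvd_prod_of_mem α hx
    rw [brAi, Nat.dvd_div_iff_mul_dvd hLP]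
    exact lcm_mul_gcd_gcd_dvd_prod α _
      (Finset.mem_erase.mpr ⟨hij.symm, Finset.mem_univ _⟩)
      (Finset.mem_erase.mpr ⟨hik.symm, Finset.mem_univ _⟩)
      (Finset.mem_erase.mpr ⟨hil.symm, Finset.mem_univ _⟩)
      (Finset.mem_erase.mpr ⟨him.symm, Finset.mem_univ _⟩)
      hjk hjl hjm hkl hkm hlm
  · rw [Nat.gcd_comm]; exact gcd_dvd_quot α hα hjk.symm
  · rw [Nat.gcd_comm]; exact gcd_dvd_quot α hα hlm.symm
end

section
/- Let n ≥ 4 and let α₁,…,α_n be positive integers satisfying the genus-zero equation 2 + (n−2)·A = Σ_{i=1}^n A_i. Then for any four pairwise distinct indices j, k, l, m, one has gcd(α_j,α_k) = 1 or gcd(α_l,α_m) = 1; that is, there cannot exist two disjoint non-coprime pairs among the α_i. -/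
/-!
Removing `α i` from the family divides `A` by `gᵢ = gcd(α i, lcm_{j ≠ i} α j)`, that is
`A = Aᵢ · gᵢ`. Hence `Aᵢ ≤ A` for every `i`, and `2 · Aᵢ ≤ A` as soon as `α i` shares a factor
with some other `α k`. Two disjoint non-coprime pairs give four such indices, so
`∑ Aᵢ ≤ (n - 4) · A + 4 · A / 2 = (n - 2) · A`, which contradicts `∑ Aᵢ = 2 + (n - 2) · A`.
-/

open Finset

theorem Nat.mul_div_lcm_eq_div_mul_gcd {x P L : ℕ} (hx : x ≠ 0) (hLP : L ∣ P) :
    x * P / Nat.lcm x L = P / L * Nat.gcd x L := by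
  rcases eq_or_ne L 0 with rfl | hL
  · simp
  obtain ⟨Q, rfl⟩ := hLP
  rw [Nat.mul_div_cancel_left _ (Nat.pos_of_ne_zero hL)]
  apply Nat.div_eq_of_eq_mul_left (Nat.pos_of_ne_zero (Nat.lcm_ne_zero hx hL))
  rw [mul_assoc, Nat.gcd_mul_lcm]
  ring

theorem Finset.prod_div_lcm_insert {ι : Type*} [DecidableEq ι] {s : Finset ι} {a : ι}
    (ha : a ∉ s) {f : ι → ℕ} (hfa : f a ≠ 0) :
    (∏ i ∈ insert a s, f i) / (insert a s).lcm f =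
      (∏ i ∈ s, f i) / s.lcm f * Nat.gcd (f a) (s.lcm f) := by
  rw [prod_insert ha, lcm_insert, lcm_eq_nat_lcm]
  exact Nat.mul_div_lcm_eq_div_mul_gcd hfa (s.lcm_dvd_prod f)

theorem Finset.two_mul_sum_add_card_mul_le {ι : Type*} [Fintype ι] {f : ι → ℕ} {M : ℕ}
    (T : Finset ι) (hle : ∀ i, f i ≤ M) (hT : ∀ i ∈ T, 2 * f i ≤ M) :
    2 * ∑ i, f i + #T * M ≤ 2 * Fintype.card ι * M := by
  classical
  calc 2 * ∑ i, f i + #T * M = ∑ i, (2 * f i + if i ∈ T then M else 0) := by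
        rw [sum_add_distrib, mul_sum, sum_ite_mem, univ_inter, sum_const, smul_eq_mul]
    _ ≤ ∑ _i : ι, 2 * M := sum_le_sum fun i _ => by
        split_ifs with h
        · exact (Nat.add_le_add_right (hT i h) M).trans (by omega)
        · simpa using Nat.mul_le_mul_left 2 (hle i)
    _ = 2 * Fintype.card ι * M := by rw [sum_const, card_univ, smul_eq_mul]; ring

section Brieskorn

variable {n : ℕ} {α : Fin n → ℕ} {i : Fin n}

theorem brA_eq_brAi_mul_gcd (hi : 0 < α i) :
    brA n α = brAi n α i * Nat.gcd (α i) ((univ.erase i).lcm α) := by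
  rw [brA, brAi, ← prod_div_lcm_insert (notMem_erase i univ) hi.ne', insert_erase (mem_univ i)]

theorem brAi_le_brA (hi : 0 < α i) : brAi n α i ≤ brA n α := by
  rw [brA_eq_brAi_mul_gcd hi]
  exact Nat.le_mul_of_pos_right _ (Nat.gcd_pos_of_pos_left _ hi)

theorem two_mul_brAi_le_brA {k : Fin n} (hi : 0 < α i) (hik : i ≠ k)
    (hgcd : Nat.gcd (α i) (α k) ≠ 1) : 2 * brAi n α i ≤ brA n α := by
  set g := Nat.gcd (α i) ((univ.erase i).lcm α)
  have hdvd : Nat.gcd (α i) (α k) ∣ g :=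
    Nat.gcd_dvd_gcd_of_dvd_right _ (dvd_lcm (mem_erase.2 ⟨hik.symm, mem_univ k⟩))
  have hg_pos : 0 < g := Nat.gcd_pos_of_pos_left _ hi
  have hg_ne_one : g ≠ 1 := fun h => hgcd (Nat.eq_one_of_dvd_one (h ▸ hdvd))
  rw [brA_eq_brAi_mul_gcd hi, mul_comm]
  exact Nat.mul_le_mul_left _ (by omega)

end Brieskorn

theorem no_two_disjoint_noncoprime_pairs_general (n : ℕ) (α : Fin n → ℕ)
    (hα : ∀ i, 0 < α i) (hg : genusEq n α) (j k l m : Fin n)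
    (hjk : j ≠ k) (hjl : j ≠ l) (hjm : j ≠ m) (hkl : k ≠ l) (hkm : k ≠ m)
    (hlm : l ≠ m) :
    Nat.gcd (α j) (α k) = 1 ∨ Nat.gcd (α l) (α m) = 1 := by
  by_contra! ⟨hjk', hlm'⟩
  have hcard : #({j, k, l, m} : Finset (Fin n)) = 4 := by
    simp [card_insert_of_notMem, *]
  have hpairs : ∀ i ∈ ({j, k, l, m} : Finset (Fin n)), 2 * brAi n α i ≤ brA n α := by
    simp only [mem_insert, mem_singleton, forall_eq_or_imp, forall_eq]
    exact ⟨two_mul_brAi_le_brA (hα j) hjk hjk',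
      two_mul_brAi_le_brA (hα k) hjk.symm (by rwa [Nat.gcd_comm]),
      two_mul_brAi_le_brA (hα l) hlm hlm',
      two_mul_brAi_le_brA (hα m) hlm.symm (by rwa [Nat.gcd_comm])⟩
  have hsum := two_mul_sum_add_card_mul_le _ (fun i => brAi_le_brA (hα i)) hpairs
  rw [hcard, Fintype.card_fin] at hsum
  have hsum_rat : 2 * ∑ i, (brAi n α i : ℚ) + 4 * brA n α ≤ 2 * n * brA n α := by
    exact_mod_cast hsum
  rw [genusEq] at hg
  linarith

theorem no_two_disjoint_noncoprime_pairs (n : ℕ) (hn : 4 ≤ n) (α : Fin n → ℕ)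
    (hα : ∀ i, 0 < α i) (hg : genusEq n α) (j k l m : Fin n)
    (hjk : j ≠ k) (hjl : j ≠ l) (hjm : j ≠ m) (hkl : k ≠ l) (hkm : k ≠ m)
    (hlm : l ≠ m) :
    Nat.gcd (α j) (α k) = 1 ∨ Nat.gcd (α l) (α m) = 1 :=
  no_two_disjoint_noncoprime_pairs_general n α hα hg j k l m hjk hjl hjm hkl hkm hlm
end

section
/- Let n ≥ 3 and let α₁,…,α_n be positive integers. Let k, l, m be three distinct indices and suppose gcd(α_i,α_j) = 1 for every pair i ≠ j not contained in {k,l,m}. Then the genus-zero equation 2 + (n−2)·A = Σ_{i=1}^n A_i holds if and only if the three-variable equation 2 + α_k·α_l·α_m/lcm(α_k,α_l,α_m) = gcd(α_l,α_m) + gcd(α_k,α_m) + gcd(α_k,α_l) holds. -/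
lemma lcm_eq_prod_of_pairwise {ι : Type*} [DecidableEq ι] (α : ι → ℕ) :
    ∀ (s : Finset ι), (∀ i ∈ s, ∀ j ∈ s, i ≠ j → Nat.Coprime (α i) (α j)) →
    s.lcm α = ∏ i ∈ s, α i := by
  intro s
  induction s using Finset.induction_on with
  | empty => simp
  | @insert a s ha ih =>
    intro hp
    rw [Finset.lcm_insert, Finset.prod_insert ha,
      ih (fun i hi j hj hij => hp i (Finset.mem_insert_of_mem hi) j (Finset.mem_insert_of_mem hj) hij),
      lcm_eq_nat_lcm]
    exact Nat.Coprime.lcm_eq_mul (Nat.Coprime.prod_right fun j hj =>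
      hp a (Finset.mem_insert_self a s) j (Finset.mem_insert_of_mem hj) (fun e => ha (e ▸ hj)))

lemma lcm_dvd_prod' {ι : Type*} (α : ι → ℕ) (s : Finset ι) : s.lcm α ∣ ∏ i ∈ s, α i :=
  Finset.lcm_dvd fun _ hi => Finset.dvd_prod_of_mem α hi

lemma lcm_union_eq {ι : Type*} [DecidableEq ι] (α : ι → ℕ) (S T : Finset ι)
    (hd : ∀ i ∈ S, i ∉ T)
    (hcopS : ∀ i ∈ S, ∀ j, j ≠ i → Nat.Coprime (α i) (α j))
    (hSpair : ∀ i ∈ S, ∀ j ∈ S, i ≠ j → Nat.Coprime (α i) (α j)) :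
    (S ∪ T).lcm α = (∏ i ∈ S, α i) * T.lcm α := by
  rw [Finset.lcm_union, lcm_eq_prod_of_pairwise α S hSpair, lcm_eq_nat_lcm]
  refine Nat.Coprime.lcm_eq_mul ?_
  refine Nat.Coprime.prod_left fun i hi => ?_
  refine Nat.Coprime.coprime_dvd_right (lcm_dvd_prod' α T) ?_
  exact Nat.Coprime.prod_right fun j hj => hcopS i hi j (fun e => hd i hi (e ▸ hj))

lemma div_union {ι : Type*} [DecidableEq ι] (α : ι → ℕ) (hα : ∀ i, 0 < α i) (S T : Finset ι)
    (hd : ∀ i ∈ S, i ∉ T)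
    (hcopS : ∀ i ∈ S, ∀ j, j ≠ i → Nat.Coprime (α i) (α j))
    (hSpair : ∀ i ∈ S, ∀ j ∈ S, i ≠ j → Nat.Coprime (α i) (α j)) :
    (∏ i ∈ S ∪ T, α i) / (S ∪ T).lcm α = (∏ i ∈ T, α i) / T.lcm α := by
  rw [Finset.prod_union (Finset.disjoint_left.mpr hd),
    lcm_union_eq α S T hd hcopS hSpair,
    Nat.mul_div_mul_left _ _ (Finset.prod_pos fun i _ => hα i)]

lemma mul_div_lcm_eq_gcd (a b : ℕ) (ha : 0 < a) (hb : 0 < b) :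
    a * b / Nat.lcm a b = Nat.gcd a b := by
  rw [← Nat.gcd_mul_lcm a b,
    Nat.mul_div_cancel _ (Nat.pos_of_ne_zero (Nat.lcm_ne_zero ha.ne' hb.ne'))]

lemma pair_lcm {ι : Type*} [DecidableEq ι] (α : ι → ℕ) (a b : ι) (hab : a ≠ b) :
    ({a, b} : Finset ι).lcm α = Nat.lcm (α a) (α b) := by
  rw [Finset.lcm_insert, Finset.lcm_singleton, lcm_eq_nat_lcm]
  simp

lemma pair_prod {ι : Type*} [DecidableEq ι] (α : ι → ℕ) (a b : ι) (hab : a ≠ b) :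
    (∏ i ∈ ({a, b} : Finset ι), α i) = α a * α b := by
  rw [Finset.prod_insert (by simp [hab]), Finset.prod_singleton]

theorem genus_zero_iff_three_variable (n : ℕ) (hn : 3 ≤ n) (α : Fin n → ℕ)
    (hα : ∀ i, 0 < α i) (k l m : Fin n) (hkl : k ≠ l) (hlm : l ≠ m) (hkm : k ≠ m)
    (h : ∀ i j : Fin n, i ≠ j → ¬({i, j} : Finset (Fin n)) ⊆ {k, l, m} →
      Nat.gcd (α i) (α j) = 1) :
    genusEq n α ↔
      2 + α k * α l * α m / Nat.lcm (α k) (Nat.lcm (α l) (α m)) =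
        Nat.gcd (α l) (α m) + Nat.gcd (α k) (α m) + Nat.gcd (α k) (α l) := by
  classical
  set T : Finset (Fin n) := {k, l, m} with hT
  have hkT : k ∈ T := by simp [hT]
  have hlT : l ∈ T := by simp [hT]
  have hmT : m ∈ T := by simp [hT]
  have hU : ∀ i, i ∉ T → ∀ j, j ≠ i → Nat.Coprime (α i) (α j) := by
    intro i hi j hj
    exact h i j (Ne.symm hj) (fun hs => hi (hs (by simp)))
  have hUT : Tᶜ ∪ T = Finset.univ := by
    ext j
    simp only [Finset.mem_union, Finset.mem_compl, Finset.mem_univ, iff_true]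
    exact (em (j ∈ T)).symm
  have hUcop : ∀ i ∈ Tᶜ, ∀ j, j ≠ i → Nat.Coprime (α i) (α j) :=
    fun i hi => hU i (Finset.mem_compl.mp hi)
  have hUpair : ∀ i ∈ Tᶜ, ∀ j ∈ Tᶜ, i ≠ j → Nat.Coprime (α i) (α j) :=
    fun i hi j _ hij => hUcop i hi j (Ne.symm hij)
  -- brA
  have hbrA : brA n α = (∏ i ∈ T, α i) / T.lcm α := by
    rw [brA, ← hUT]
    exact div_union α hα Tᶜ T (fun i hi => Finset.mem_compl.mp hi) hUcop hUpair
  -- brAi outside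
  have hbrAi_out : ∀ i, i ∉ T → brAi n α i = brA n α := by
    intro i hi
    have he : Finset.univ.erase i = (Tᶜ.erase i) ∪ T := by
      ext j
      simp only [Finset.mem_erase, Finset.mem_univ, and_true, Finset.mem_union,
        Finset.mem_compl]
      constructor
      · intro hj
        by_cases hjT : j ∈ T
        · exact Or.inr hjT
        · exact Or.inl ⟨hj, hjT⟩
      · rintro (⟨hj, _⟩ | hjT)
        · exact hj
        · exact fun e => hi (e ▸ hjT)
    rw [brAi, he, hbrA]
    exact div_union α hα _ T
      (fun j hj => Finset.mem_compl.mp (Finset.mem_erase.mp hj).2)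
      (fun j hj => hUcop j (Finset.mem_erase.mp hj).2)
      (fun i hi j hj hij => hUpair i (Finset.mem_erase.mp hi).2 j (Finset.mem_erase.mp hj).2 hij)
  -- generic brAi inside T
  have hbrAi_in : ∀ a b c : Fin n, b ≠ c → b ∈ T → c ∈ T →
      Finset.univ.erase a = Tᶜ ∪ ({b, c} : Finset (Fin n)) →
      brAi n α a = Nat.gcd (α b) (α c) := by
    intro a b c hbc hbT hcT he
    have hbcT : ({b, c} : Finset (Fin n)) ⊆ T := by
      intro j hj
      rcases Finset.mem_insert.mp hj with e | e
      · exact e ▸ hbT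
      · exact (Finset.mem_singleton.mp e) ▸ hcT
    rw [brAi, he, div_union α hα Tᶜ _ (fun i hi hmem => Finset.mem_compl.mp hi (hbcT hmem))
        hUcop hUpair, pair_prod α b c hbc, pair_lcm α b c hbc,
      mul_div_lcm_eq_gcd _ _ (hα b) (hα c)]
  -- erase identities
  have herase : ∀ a b c : Fin n, T = {a, b, c} → a ≠ b → a ≠ c →
      Finset.univ.erase a = Tᶜ ∪ ({b, c} : Finset (Fin n)) := by
    intro a b c hTe hab hac
    ext j
    simp only [Finset.mem_erase, Finset.mem_univ, and_true, Finset.mem_union,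
      Finset.mem_compl, hTe, Finset.mem_insert, Finset.mem_singleton]
    constructor
    · intro hj
      by_cases hb : j = b
      · exact Or.inr (Or.inl hb)
      by_cases hc : j = c
      · exact Or.inr (Or.inr hc)
      · exact Or.inl (by push_neg; exact ⟨hj, hb, hc⟩)
    · rintro (hjT | (e | e))
      · exact fun e => hjT (Or.inl e)
      · subst e; exact fun e2 => hab e2.symm
      · subst e; exact fun e2 => hac e2.symm
  have hTk : T = {k, l, m} := hT
  have hTl : T = {l, k, m} := by ext j; simp only [hT, Finset.mem_insert, Finset.mem_singleton]; tauto
  have hTm : T = {m, k, l} := by ext j; simp only [hT, Finset.mem_insert, Finset.mem_singleton]; tauto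
  have hAk : brAi n α k = Nat.gcd (α l) (α m) :=
    hbrAi_in k l m hlm hlT hmT (herase k l m hTk hkl hkm)
  have hAl : brAi n α l = Nat.gcd (α k) (α m) :=
    hbrAi_in l k m hkm hkT hmT (herase l k m hTl (Ne.symm hkl) hlm)
  have hAm : brAi n α m = Nat.gcd (α k) (α l) :=
    hbrAi_in m k l hkl hkT hlT (herase m k l hTm (Ne.symm hkm) (Ne.symm hlm))
  -- card of T
  have hcardT : T.card = 3 := by
    rw [hT, Finset.card_insert_of_notMem (by simp [hkl, hkm]),
      Finset.card_insert_of_notMem (by simp [hlm]), Finset.card_singleton]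
  have hcardU : Tᶜ.card = n - 3 := by
    rw [Finset.card_compl, hcardT, Fintype.card_fin]
  -- value of brA in three-variable form
  have hbrA' : brA n α = α k * α l * α m / Nat.lcm (α k) (Nat.lcm (α l) (α m)) := by
    rw [hbrA, hT, Finset.lcm_insert, pair_lcm α l m hlm, lcm_eq_nat_lcm,
      Finset.prod_insert (by simp [hkl, hkm]), pair_prod α l m hlm, mul_assoc]
  -- sum splitting
  have hsum : ∑ i, (brAi n α i : ℚ) = ((n - 3 : ℕ) : ℚ) * (brA n α : ℚ)
      + ((Nat.gcd (α l) (α m) : ℚ) + (Nat.gcd (α k) (α m) : ℚ) + (Nat.gcd (α k) (α l) : ℚ)) := by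
    rw [← hUT, Finset.sum_union disjoint_compl_left]
    have h1 : ∑ i ∈ Tᶜ, (brAi n α i : ℚ) = ((n - 3 : ℕ) : ℚ) * (brA n α : ℚ) := by
      rw [Finset.sum_congr rfl (fun i hi => by
        rw [hbrAi_out i (Finset.mem_compl.mp hi)]), Finset.sum_const, hcardU, nsmul_eq_mul]
    have h2 : ∑ i ∈ T, (brAi n α i : ℚ) =
        (Nat.gcd (α l) (α m) : ℚ) + (Nat.gcd (α k) (α m) : ℚ) + (Nat.gcd (α k) (α l) : ℚ) := by
      rw [hT, Finset.sum_insert (by simp [hkl, hkm]), Finset.sum_insert (by simp [hlm]),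
        Finset.sum_singleton, hAk, hAl, hAm]
      ring
    rw [h1, h2]
  have hc3 : ((n - 3 : ℕ) : ℚ) = (n : ℚ) - 3 := by
    rw [Nat.cast_sub hn]; norm_num
  have key : genusEq n α ↔ 2 + brA n α =
      Nat.gcd (α l) (α m) + Nat.gcd (α k) (α m) + Nat.gcd (α k) (α l) := by
    unfold genusEq
    rw [hsum, hc3]
    have hring : ((n : ℚ) - 2) * (brA n α : ℚ)
        = ((n : ℚ) - 3) * (brA n α : ℚ) + (brA n α : ℚ) := by ring
    constructor
    · intro he
      have h' : (2 : ℚ) + (brA n α : ℚ) = (Nat.gcd (α l) (α m) : ℚ)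
          + (Nat.gcd (α k) (α m) : ℚ) + (Nat.gcd (α k) (α l) : ℚ) := by linarith
      exact_mod_cast h'
    · intro he
      have h' : (2 : ℚ) + (brA n α : ℚ) = (Nat.gcd (α l) (α m) : ℚ)
          + (Nat.gcd (α k) (α m) : ℚ) + (Nat.gcd (α k) (α l) : ℚ) := by exact_mod_cast he
      linarith
  rw [key, hbrA']
end

section
/- Let a, b, c be positive integers. Then 2 + a·b·c/lcm(a,b,c) = gcd(b,c) + gcd(a,c) + gcd(a,b) holds if and only if either gcd(a,b) = gcd(b,c) = gcd(a,c) = 2, or at least two of the three numbers gcd(a,b), gcd(b,c), gcd(a,c) are equal to 1. -/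
lemma key_id (a b c : ℕ) (ha : 0 < a) (hb : 0 < b) (hc : 0 < c) :
    a * b * c * Nat.gcd a (Nat.gcd b c) =
      Nat.lcm a (Nat.lcm b c) * (Nat.gcd b c * Nat.gcd a c * Nat.gcd a b) := by
  have ha' := ha.ne'
  have hb' := hb.ne'
  have hc' := hc.ne'
  have hbc : Nat.lcm b c ≠ 0 := Nat.lcm_ne_zero hb' hc'
  have habc : Nat.lcm a (Nat.lcm b c) ≠ 0 := Nat.lcm_ne_zero ha' hbc
  apply Nat.eq_of_factorization_eq
  · exact mul_ne_zero (mul_ne_zero (mul_ne_zero ha' hb') hc')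
      (Nat.gcd_ne_zero_left ha')
  · exact mul_ne_zero habc (mul_ne_zero (mul_ne_zero (Nat.gcd_ne_zero_left hb')
      (Nat.gcd_ne_zero_left ha')) (Nat.gcd_ne_zero_left ha'))
  intro p
  simp [Nat.factorization_mul, Nat.factorization_gcd, Nat.factorization_lcm,
    ha', hb', hc', hbc, habc, Nat.gcd_ne_zero_left, Nat.gcd_ne_zero_right,
    mul_ne_zero, Finsupp.inf_apply, Finsupp.sup_apply]
  omega

lemma arith_case (x y z g d : ℕ) (hx : 2 ≤ x) (hxy : x ≤ y) (hyz : y ≤ z)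
    (hg : 0 < g) (hgx : g ∣ x) (hd : d * g = x * y * z) (he : 2 + d = x + y + z) :
    x = 2 ∧ y = 2 ∧ z = 2 ∧ g = 2 := by
  have hgle : g ≤ x := Nat.le_of_dvd (by omega) hgx
  have h1 : y * z * g ≤ d * g := by
    rw [hd]; calc y * z * g ≤ y * z * x := Nat.mul_le_mul_left _ hgle
      _ = x * y * z := by ring
  have h2 : y * z ≤ d := Nat.le_of_mul_le_mul_right h1 hg
  have h3 : y * z + 2 ≤ 2 * y + z := by omega
  have hy2 : y = 2 ∧ z = 2 := by constructor <;> nlinarith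
  obtain ⟨hy, hz⟩ := hy2
  have hx2 : x = 2 := by omega
  refine ⟨hx2, hy, hz, ?_⟩
  subst hx2 hy hz
  have hd4 : d = 4 := by omega
  subst hd4
  omega

theorem three_variable_genus_zero_iff (a b c : ℕ) (ha : 0 < a) (hb : 0 < b)
    (hc : 0 < c) :
    2 + a * b * c / Nat.lcm a (Nat.lcm b c) =
        Nat.gcd b c + Nat.gcd a c + Nat.gcd a b ↔
      (Nat.gcd a b = 2 ∧ Nat.gcd b c = 2 ∧ Nat.gcd a c = 2) ∨
      ((Nat.gcd a b = 1 ∧ Nat.gcd b c = 1) ∨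
       (Nat.gcd a b = 1 ∧ Nat.gcd a c = 1) ∨
       (Nat.gcd b c = 1 ∧ Nat.gcd a c = 1)) := by
  set x := Nat.gcd b c with hxdef
  set y := Nat.gcd a c with hydef
  set z := Nat.gcd a b with hzdef
  set g := Nat.gcd a (Nat.gcd b c) with hgdef
  set L := Nat.lcm a (Nat.lcm b c) with hLdef
  set d := a * b * c / L with hddef
  have hxpos : 0 < x := Nat.gcd_pos_of_pos_left _ hb
  have hypos : 0 < y := Nat.gcd_pos_of_pos_left _ ha
  have hzpos : 0 < z := Nat.gcd_pos_of_pos_left _ ha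
  have hgpos : 0 < g := Nat.gcd_pos_of_pos_left _ ha
  have hLpos : 0 < L := Nat.pos_of_ne_zero (Nat.lcm_ne_zero ha.ne'
    (Nat.lcm_ne_zero hb.ne' hc.ne'))
  have hgx : g ∣ x := Nat.gcd_dvd_right _ _
  have hga : g ∣ a := Nat.gcd_dvd_left _ _
  have hgb : g ∣ b := dvd_trans hgx (Nat.gcd_dvd_left _ _)
  have hgc : g ∣ c := dvd_trans hgx (Nat.gcd_dvd_right _ _)
  have hgy : g ∣ y := Nat.dvd_gcd hga hgc
  have hgz : g ∣ z := Nat.dvd_gcd hga hgb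
  have hLdvd : L ∣ a * b * c := by
    apply Nat.lcm_dvd
    · exact ⟨b * c, by ring⟩
    · exact dvd_trans (Nat.lcm_dvd ⟨c, rfl⟩ ⟨b, by ring⟩) ⟨a, by ring⟩
  have hkey := key_id a b c ha hb hc
  have hd : d * g = x * y * z := by
    have h1 : d * L = a * b * c := Nat.div_mul_cancel hLdvd
    have h2 : d * g * L = x * y * z * L := by
      calc d * g * L = (d * L) * g := by ring
        _ = a * b * c * g := by rw [h1]
        _ = L * (x * y * z) := hkey
        _ = x * y * z * L := by ring
    exact Nat.eq_of_mul_eq_mul_right hLpos h2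
  constructor
  · intro he
    by_cases hx1 : x = 1 <;> by_cases hy1 : y = 1 <;> by_cases hz1 : z = 1
    · exact Or.inr (Or.inl ⟨hz1, hx1⟩)
    · exact Or.inr (Or.inr (Or.inr ⟨hx1, hy1⟩))
    · exact Or.inr (Or.inl ⟨hz1, hx1⟩)
    · -- x = 1, y ≥ 2, z ≥ 2
      exfalso
      have hg1 : g = 1 := Nat.eq_one_of_dvd_one (hx1 ▸ hgx)
      rw [hg1, hx1] at hd
      have hy2 : 2 ≤ y := by omega
      have hz2 : 2 ≤ z := by omega
      have hdyz : d = y * z := by simpa using hd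
      nlinarith
    · exact Or.inr (Or.inr (Or.inl ⟨hz1, hy1⟩))
    · -- y = 1, x ≥ 2, z ≥ 2
      exfalso
      have hg1 : g = 1 := Nat.eq_one_of_dvd_one (hy1 ▸ hgy)
      rw [hg1, hy1] at hd
      have hx2 : 2 ≤ x := by omega
      have hz2 : 2 ≤ z := by omega
      have hdxz : d = x * z := by simpa using hd
      nlinarith
    · -- z = 1, x ≥ 2, y ≥ 2
      exfalso
      have hg1 : g = 1 := Nat.eq_one_of_dvd_one (hz1 ▸ hgz)
      rw [hg1, hz1] at hd
      have hx2 : 2 ≤ x := by omega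
      have hy2 : 2 ≤ y := by omega
      have hdxy : d = x * y := by simpa using hd
      nlinarith
    · -- all ≥ 2
      left
      have hx2 : 2 ≤ x := by omega
      have hy2 : 2 ≤ y := by omega
      have hz2 : 2 ≤ z := by omega
      rcases le_total x y with h1 | h1 <;> rcases le_total y z with h2 | h2 <;>
        rcases le_total x z with h3 | h3
      · obtain ⟨e1, e2, e3, _⟩ := arith_case x y z g d hx2 h1 h2 hgpos hgx
          hd (by omega)
        exact ⟨e3, e1, e2⟩
      · obtain ⟨e1, e2, e3, _⟩ := arith_case x y z g d hx2 h1 h2 hgpos hgx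
          hd (by omega)
        exact ⟨e3, e1, e2⟩
      · obtain ⟨e1, e2, e3, _⟩ := arith_case x z y g d hx2 h3 h2 hgpos hgx
          (by rw [hd]; ring) (by omega)
        exact ⟨e2, e1, e3⟩
      · obtain ⟨e1, e2, e3, _⟩ := arith_case z x y g d (by omega) h3 h1 hgpos hgz
          (by rw [hd]; ring) (by omega)
        exact ⟨e1, e2, e3⟩
      · obtain ⟨e1, e2, e3, _⟩ := arith_case y x z g d hy2 h1 h3 hgpos hgy
          (by rw [hd]; ring) (by omega)
        exact ⟨e3, e2, e1⟩
      · obtain ⟨e1, e2, e3, _⟩ := arith_case y z x g d hy2 h2 h3 hgpos hgy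
          (by rw [hd]; ring) (by omega)
        exact ⟨e2, e3, e1⟩
      · obtain ⟨e1, e2, e3, _⟩ := arith_case z y x g d hz2 h2 h1 hgpos hgz
          (by rw [hd]; ring) (by omega)
        exact ⟨e1, e3, e2⟩
      · obtain ⟨e1, e2, e3, _⟩ := arith_case z y x g d hz2 h2 h1 hgpos hgz
          (by rw [hd]; ring) (by omega)
        exact ⟨e1, e3, e2⟩
  · rintro (⟨hz2, hx2, hy2⟩ | ⟨hz1, hx1⟩ | ⟨hz1, hy1⟩ | ⟨hx1, hy1⟩)
    · have hg2 : g = 2 := by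
        apply Nat.dvd_antisymm
        · rw [← hx2]; exact hgx
        · exact Nat.dvd_gcd (by rw [← hz2]; exact Nat.gcd_dvd_left a b)
            (by rw [← hx2])
      rw [hg2, hx2, hy2, hz2] at hd
      norm_num at hd
      omega
    · have hg1 : g = 1 := Nat.eq_one_of_dvd_one (hx1 ▸ hgx)
      rw [hg1, hz1, hx1] at hd
      simp at hd
      omega
    · have hg1 : g = 1 := Nat.eq_one_of_dvd_one (hz1 ▸ hgz)
      rw [hg1, hz1, hy1] at hd
      simp at hd
      omega
    · have hg1 : g = 1 := Nat.eq_one_of_dvd_one (hx1 ▸ hgx)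
      rw [hg1, hx1, hy1] at hd
      simp at hd
      omega
end

section
/- Let d, s₁, s₂, s₃ be positive integers. Then d·(s₁ + s₂ + s₃) = 2 + d²·s₁·s₂·s₃ holds if and only if either d = 2 and s₁ = s₂ = s₃ = 1, or d = 1 and at least two of s₁, s₂, s₃ are equal to 1. -/
lemma aux_d2 (a b c : ℤ) (ha : 1 ≤ a) (hb : 1 ≤ b) (hc : 1 ≤ c)
    (h : a + b + c = 1 + 2 * (a * b * c)) : a = 1 ∧ b = 1 ∧ c = 1 := by
  have hx : 0 ≤ a - 1 := by linarith
  have hy : 0 ≤ b - 1 := by linarith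
  have hz : 0 ≤ c - 1 := by linarith
  have key : (a - 1) + (b - 1) + (c - 1) ≤ 0 := by
    nlinarith [mul_nonneg (mul_nonneg hx hy) hz, mul_nonneg hx hy,
      mul_nonneg hy hz, mul_nonneg hx hz]
  refine ⟨by linarith, by linarith, by linarith⟩

lemma aux_d1 (a b c : ℤ) (ha : 1 ≤ a) (hb : 1 ≤ b) (hc : 1 ≤ c)
    (h : a + b + c = 2 + a * b * c) :
    (a = 1 ∧ b = 1) ∨ (a = 1 ∧ c = 1) ∨ (b = 1 ∧ c = 1) := by
  have hx : 0 ≤ a - 1 := by linarith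
  have hy : 0 ≤ b - 1 := by linarith
  have hz : 0 ≤ c - 1 := by linarith
  have key : (a-1)*(b-1) + (b-1)*(c-1) + (a-1)*(c-1) ≤ 0 := by
    nlinarith [mul_nonneg (mul_nonneg hx hy) hz]
  have h1 : (a-1)*(b-1) = 0 := le_antisymm (by nlinarith [mul_nonneg hy hz, mul_nonneg hx hz]) (mul_nonneg hx hy)
  have h2 : (b-1)*(c-1) = 0 := le_antisymm (by nlinarith [mul_nonneg hx hy, mul_nonneg hx hz]) (mul_nonneg hy hz)
  have h3 : (a-1)*(c-1) = 0 := le_antisymm (by nlinarith [mul_nonneg hx hy, mul_nonneg hy hz]) (mul_nonneg hx hz)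
  rcases mul_eq_zero.mp h1 with h | h
  · rcases mul_eq_zero.mp h2 with h' | h'
    · exact Or.inl ⟨by linarith, by linarith⟩
    · exact Or.inr (Or.inl ⟨by linarith, by linarith⟩)
  · rcases mul_eq_zero.mp h3 with h' | h'
    · exact Or.inl ⟨by linarith, by linarith⟩
    · exact Or.inr (Or.inr ⟨by linarith, by linarith⟩)

theorem diophantine_genus_zero (d s₁ s₂ s₃ : ℕ) (hd : 0 < d) (h1 : 0 < s₁)
    (h2 : 0 < s₂) (h3 : 0 < s₃) :
    d * (s₁ + s₂ + s₃) = 2 + d ^ 2 * (s₁ * s₂ * s₃) ↔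
      (d = 2 ∧ s₁ = 1 ∧ s₂ = 1 ∧ s₃ = 1) ∨
      (d = 1 ∧ ((s₁ = 1 ∧ s₂ = 1) ∨ (s₁ = 1 ∧ s₃ = 1) ∨ (s₂ = 1 ∧ s₃ = 1))) := by
  have ha : (1:ℤ) ≤ (s₁:ℤ) := by exact_mod_cast h1
  have hb : (1:ℤ) ≤ (s₂:ℤ) := by exact_mod_cast h2
  have hc : (1:ℤ) ≤ (s₃:ℤ) := by exact_mod_cast h3
  constructor
  · intro h
    have hdvd : d ∣ 2 := by
      have hp : d ∣ d ^ 2 * (s₁ * s₂ * s₃) := Dvd.dvd.mul_right (dvd_pow_self d two_ne_zero) _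
      have hs : d ∣ 2 + d ^ 2 * (s₁ * s₂ * s₃) := h ▸ Dvd.intro _ rfl
      rw [add_comm] at hs
      exact (Nat.dvd_add_right hp).mp hs
    have hd2 : d ≤ 2 := Nat.le_of_dvd two_pos hdvd
    have h' : (d:ℤ) * ((s₁:ℤ) + s₂ + s₃) = 2 + (d:ℤ) ^ 2 * ((s₁:ℤ) * s₂ * s₃) := by
      exact_mod_cast h
    interval_cases d
    · right
      refine ⟨rfl, ?_⟩
      have := aux_d1 (s₁:ℤ) s₂ s₃ ha hb hc (by push_cast at h' ⊢; linarith)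
      rcases this with ⟨u, v⟩ | ⟨u, v⟩ | ⟨u, v⟩
      · exact Or.inl ⟨by exact_mod_cast u, by exact_mod_cast v⟩
      · exact Or.inr (Or.inl ⟨by exact_mod_cast u, by exact_mod_cast v⟩)
      · exact Or.inr (Or.inr ⟨by exact_mod_cast u, by exact_mod_cast v⟩)
    · left
      have := aux_d2 (s₁:ℤ) s₂ s₃ ha hb hc (by push_cast at h' ⊢; linarith)
      exact ⟨rfl, by exact_mod_cast this.1, by exact_mod_cast this.2.1,
        by exact_mod_cast this.2.2⟩
  · rintro (⟨rfl, rfl, rfl, rfl⟩ | ⟨rfl, ⟨rfl, rfl⟩ | ⟨rfl, rfl⟩ | ⟨rfl, rfl⟩⟩) <;> ring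
end
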